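/- arXiv:1310.7656 — 3 statements merged into one kernel-verified Lean document; each statement's English description precedes it below -/
import Mathlib

section
/- Let Λ be a finitely aligned k-graph, let c be a T-valued 2-cocycle on Λ, let Ε ⊆ FE(Λ) be satiated, let t be a relative Cuntz–Krieger (Λ,c;Ε)-family in a C*-algebra, and let I be a closed two-sided ideal of C*(t). Set H_I := {v ∈ Λ^0 : t_v ∈ I} (a hereditary Ε-saturated set). Then B_I := {F ∈ FE(Λ \ ΛH_I) : Δ(t)^F ∈ I} is a satiated subset of FE(Λ \ ΛH_I), i.e. B_I satisfies (S1)–(S4) with respect to the k-graph Λ \ ΛH_I. -/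
open scoped BigOperators

/-- A `k`-graph: a countable category with degree functor `d : Λ → ℕ^k`
satisfying the factorisation property.  Composition `comp μ ν` is only
meaningful when `s μ = r ν`. -/
structure KGraph (k : ℕ) where
  Path : Type
  countable : Countable Path
  r : Path → Path
  s : Path → Path
  d : Path → (Fin k → ℕ)
  comp : Path → Path → Path
  d_r : ∀ l, d (r l) = 0
  d_s : ∀ l, d (s l) = 0
  r_of_vertex : ∀ v, d v = 0 → r v = v
  s_of_vertex : ∀ v, d v = 0 → s v = v
  id_comp : ∀ l, comp (r l) l = l
  comp_id : ∀ l, comp l (s l) = l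
  r_comp : ∀ μ ν, s μ = r ν → r (comp μ ν) = r μ
  s_comp : ∀ μ ν, s μ = r ν → s (comp μ ν) = s ν
  d_comp : ∀ μ ν, s μ = r ν → d (comp μ ν) = d μ + d ν
  comp_assoc : ∀ l μ ν, s l = r μ → s μ = r ν →
    comp (comp l μ) ν = comp l (comp μ ν)
  factor : ∀ (l : Path) (m n : Fin k → ℕ), d l = m + n →
    ∃! p : Path × Path, d p.1 = m ∧ d p.2 = n ∧ s p.1 = r p.2 ∧ comp p.1 p.2 = l

namespace KGraph

variable {k : ℕ} (G : KGraph k)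

def IsVertex (v : G.Path) : Prop := G.d v = 0

/-- `MCE μ ν = μΛ ∩ νΛ ∩ Λ^{d μ ⊔ d ν}`. -/
def MCE (μ ν : G.Path) : Set G.Path :=
  {l | G.d l = G.d μ ⊔ G.d ν ∧
      (∃ α, G.s μ = G.r α ∧ G.comp μ α = l) ∧
      (∃ β, G.s ν = G.r β ∧ G.comp ν β = l)}

def FinitelyAligned : Prop := ∀ μ ν : G.Path, (G.MCE μ ν).Finite

/-- `Ext(μ; E) = ⋃_{ν ∈ E} {α : μα ∈ MCE(μ,ν)}`. -/
def Ext (μ : G.Path) (E : Set G.Path) : Set G.Path :=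
  {α | G.s μ = G.r α ∧ ∃ ν ∈ E, G.comp μ α ∈ G.MCE μ ν}

/-- `Ext` computed relative to a sub-`k`-graph with path set `W`. -/
def ExtIn (W : Set G.Path) (μ : G.Path) (E : Set G.Path) : Set G.Path :=
  {α | G.s μ = G.r α ∧ ∃ ν ∈ E, G.comp μ α ∈ G.MCE μ ν ∩ W}

/-- `E` is exhaustive at `v` relative to the sub-`k`-graph with path set `W`. -/
def ExhaustiveIn (W : Set G.Path) (v : G.Path) (E : Set G.Path) : Prop :=
  ∀ l ∈ W, G.r l = v → ∃ μ ∈ E, (G.MCE l μ ∩ W).Nonempty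

def Exhaustive (v : G.Path) (E : Set G.Path) : Prop := G.ExhaustiveIn Set.univ v E

/-- Membership in `FE` of the sub-`k`-graph with path set `W`. -/
def IsFEIn (W : Set G.Path) (E : Set G.Path) : Prop :=
  E.Finite ∧ E ⊆ W ∧ (∀ μ ∈ E, ¬ G.IsVertex μ) ∧
    ∃ v, G.IsVertex v ∧ (∀ μ ∈ E, G.r μ = v) ∧ G.ExhaustiveIn W v E

def IsFE (E : Set G.Path) : Prop := G.IsFEIn Set.univ E

/-- A satiated collection of finite exhaustive sets, relative to the sub-`k`-graph `W`. -/
def SatiatedIn (W : Set G.Path) (Ε : Set (Set G.Path)) : Prop :=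
  (∀ E ∈ Ε, G.IsFEIn W E) ∧
  ∀ F ∈ Ε, ∀ v, G.IsVertex v → (∀ μ ∈ F, G.r μ = v) →
    ((∀ l ∈ W, G.r l = v → l ≠ v → insert l F ∈ Ε) ∧
     (∀ l ∈ W, G.r l = v →
        (¬ ∃ μ ∈ F, ∃ μ', G.s μ = G.r μ' ∧ G.comp μ μ' = l) →
        G.ExtIn W l F ∈ Ε) ∧
     (∀ lam lam', lam ∈ F → G.s lam = G.r lam' → G.comp lam lam' ∈ F →
        lam' ≠ G.s lam → F \ {G.comp lam lam'} ∈ Ε) ∧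
     (∀ lam ∈ F, ∀ Gs ∈ Ε, (∀ μ ∈ Gs, G.r μ = G.s lam) →
        ((F \ {lam}) ∪ (G.comp lam) '' Gs) ∈ Ε))

def Satiated (Ε : Set (Set G.Path)) : Prop := G.SatiatedIn Set.univ Ε

end KGraph

/-- A normalised `𝕋`-valued categorical `2`-cocycle on a `k`-graph, with the
circle realised as the norm-one complex numbers. -/
structure KGraph.Cocycle {k : ℕ} (G : KGraph k) where
  c : G.Path → G.Path → ℂ
  norm_one : ∀ μ ν, G.s μ = G.r ν → ‖c μ ν‖ = 1
  cocycle : ∀ l μ ν, G.s l = G.r μ → G.s μ = G.r ν →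
    c l μ * c (G.comp l μ) ν = c μ ν * c l (G.comp μ ν)
  left_id : ∀ l, c (G.r l) l = 1
  right_id : ∀ l, c l (G.s l) = 1

namespace KGraph

variable {k : ℕ} (G : KGraph k)

section CStar

variable {A : Type*} [NonUnitalNormedRing A] [StarRing A] [CStarRing A]
  [NormedSpace ℂ A] [IsScalarTower ℂ A A] [SMulCommClass ℂ A A]
  [StarModule ℂ A] [CompleteSpace A]

/-- Toeplitz–Cuntz–Krieger `(Λ, c)`-family. -/
def IsTCK (σ : G.Cocycle) (t : G.Path → A) : Prop :=
  (∀ v, G.IsVertex v → star (t v) = t v ∧ t v * t v = t v) ∧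
  (∀ v w, G.IsVertex v → G.IsVertex w → v ≠ w → t v * t w = 0) ∧
  (∀ μ ν, G.s μ = G.r ν → t μ * t ν = σ.c μ ν • t (G.comp μ ν)) ∧
  (∀ l, star (t l) * t l = t (G.s l)) ∧
  (∀ μ ν (F : Finset G.Path), (F : Set G.Path) = G.MCE μ ν →
    (t μ * star (t μ)) * (t ν * star (t ν)) = ∑ l ∈ F, t l * star (t l))

open scoped Classical in
/-- `Δ(t)^F = ∏_{l ∈ F} (q_v - q_l)`; the factors commute for a TCK family, so the
`noncommProd` below is the product from the paper.  The product is computed in the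
unitization (with a harmless prefactor `q_v`, which acts as the identity on each
factor for a TCK family with `F ⊆ vΛ`), so that the empty product is `q_v`. -/
noncomputable def Delta (t : G.Path → A) (v : G.Path) (F : Finset G.Path) : A :=
  if h : (F : Set G.Path).Pairwise (Function.onFun Commute fun l =>
      ((t v * star (t v) - t l * star (t l) : A) : Unitization ℂ A))
  then (((t v * star (t v) : A) : Unitization ℂ A) *
      F.noncommProd (fun l => ((t v * star (t v) - t l * star (t l) : A) : Unitization ℂ A)) h).snd
  else 0

/-- Relative Cuntz–Krieger `(Λ, c; Ε)`-family. -/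
def IsRelCK (σ : G.Cocycle) (Ε : Set (Set G.Path)) (t : G.Path → A) : Prop :=
  G.IsTCK σ t ∧ ∀ (F : Finset G.Path) (v : G.Path), (F : Set G.Path) ∈ Ε →
    G.IsVertex v → (∀ μ ∈ F, G.r μ = v) → G.Delta t v F = 0

/-- Cuntz–Krieger `(Λ, c)`-family (finitely aligned case). -/
def IsCK (σ : G.Cocycle) (t : G.Path → A) : Prop :=
  G.IsRelCK σ {E | G.IsFE E} t

/-- The `C*`-subalgebra of `A` generated by a family `t`, as a subset of `A`. -/
def cstarOf (t : G.Path → A) : Set A :=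
  closure (↑(NonUnitalStarAlgebra.adjoin ℂ (Set.range t)) : Set A)

end CStar

/-- Row-finite with no sources: every `vΛ^n` is finite and nonempty. -/
def RowFiniteNoSources : Prop :=
  ∀ v, G.IsVertex v → ∀ n : Fin k → ℕ,
    {l | G.r l = v ∧ G.d l = n}.Finite ∧ {l | G.r l = v ∧ G.d l = n}.Nonempty

section CStar2

variable {A : Type*} [NonUnitalNormedRing A] [StarRing A] [CStarRing A]
  [NormedSpace ℂ A] [IsScalarTower ℂ A A] [SMulCommClass ℂ A A]
  [StarModule ℂ A] [CompleteSpace A]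

/-- Cuntz–Krieger family, row-finite no sources formulation:
`∑_{λ ∈ vΛ^n} t_λ t_λ* = t_v`. -/
def IsCKrf (σ : G.Cocycle) (t : G.Path → A) : Prop :=
  G.IsTCK σ t ∧ ∀ v (n : Fin k → ℕ) (F : Finset G.Path), G.IsVertex v →
    (F : Set G.Path) = {l | G.r l = v ∧ G.d l = n} →
    ∑ l ∈ F, t l * star (t l) = t v

end CStar2

/-- A filter in a `k`-graph. -/
def IsFilter (S : Set G.Path) : Prop :=
  (∀ l, (∃ α, G.s l = G.r α ∧ G.comp l α ∈ S) → l ∈ S) ∧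
  (∀ μ ∈ S, ∀ ν ∈ S, (G.MCE μ ν ∩ S).Nonempty)

/-- An ultrafilter: a filter meeting every `Λ^n`. -/
def IsUltrafilter (S : Set G.Path) : Prop :=
  G.IsFilter S ∧ ∀ n : Fin k → ℕ, ∃ l ∈ S, G.d l = n

/-- `ℓ_μ(S) = {ν : νΛ ∩ μS ≠ ∅}`. -/
def lmap (μ : G.Path) (S : Set G.Path) : Set G.Path :=
  {ν | ∃ τ ∈ S, G.s μ = G.r τ ∧ ∃ α, G.s ν = G.r α ∧ G.comp ν α = G.comp μ τ}

/-- `μ ∼ ν`: `ℓ_μ(S) = ℓ_ν(S)` for every ultrafilter `S` with `r(S) = s(μ)`. -/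
def PEquiv (μ ν : G.Path) : Prop :=
  ∀ S, G.IsUltrafilter S → G.s μ ∈ S → G.lmap μ S = G.lmap ν S

/-- `d` with values in `ℤ^k`. -/
def dZ (l : G.Path) : Fin k → ℤ := fun i => (G.d l i : ℤ)

/-- `Per(Λ) ≤ ℤ^k`, generated by `{d(μ) - d(ν) : μ ∼ ν}`. -/
def PerGroup : AddSubgroup (Fin k → ℤ) :=
  AddSubgroup.closure
    {m | ∃ μ ν, G.s μ = G.s ν ∧ G.PEquiv μ ν ∧ m = G.dZ μ - G.dZ ν}

/-- The hereditary set `H_Per`. -/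
def HPer : Set G.Path :=
  {v | G.IsVertex v ∧ ∀ m n : Fin k → ℕ,
    ((fun i => (m i : ℤ)) - fun i => (n i : ℤ)) ∈ G.PerGroup →
    ∀ l, G.r l = v → G.d l = m →
      ∃ μ, G.r μ = v ∧ G.d μ = n ∧ G.s μ = G.s l ∧ G.PEquiv l μ}

end KGraph

/-!
Since `I` is an ideal, `H_I` is hereditary: `t_{r(λ)} ∈ I` gives `t_λ = t_{r(λ)} t_λ ∈ I` and
then `t_{s(λ)} = t_λ^* t_λ ∈ I`. Hence `Λ \ ΛH_I` is closed under taking prefixes of its paths,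
and a common extension of `μ` and `ν` lying in `Λ \ ΛH_I` factors through an element of
`MCE(μ, ν)` that again lies in `Λ \ ΛH_I`; this makes the sets produced by (S1)–(S4) from
finite exhaustive sets of `Λ \ ΛH_I` finite exhaustive again. That `Δ(t)^F ∈ I` survives
the four operations comes from the identities
* `Δ^{F ∪ {λ}} = (q_v - q_λ) Δ^F`;
* `t_λ^* Δ^F t_λ = Δ^{Ext(λ;F)}`, in which each factor `q_{s(λ)} - q_α` with `s(α) ∈ H_I`
  is congruent to `q_{s(λ)}` modulo `I` and can be dropped, leaving `Δ^{Ext(λ;F) \ ΛH_I}`;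
* `Δ^{F \ {λλ'}} = Δ^F` for `λ ∈ F`, because `q_{λλ'} ≤ q_λ`;
* `Δ^{(F \ {λ}) ∪ λG} = Δ^{F \ {λ}} (q_v - q_λ + t_λ Δ^G t_λ^*) = Δ^F + Δ^{F \ {λ}} t_λ Δ^G t_λ^*`.
-/

namespace KGraph

variable {k : ℕ} {G : KGraph k}

section Combinatorics

lemma isVertex_s (l : G.Path) : G.IsVertex (G.s l) := G.d_s l

lemma eq_s_of_d_eq_zero {μ a : G.Path} (h : G.s μ = G.r a) (hd : G.d a = 0) : a = G.s μ := by
  rw [h, G.r_of_vertex a hd]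

lemma eq_s_of_comp_eq_self {μ a : G.Path} (h : G.s μ = G.r a) (he : G.comp μ a = μ) :
    a = G.s μ :=
  eq_s_of_d_eq_zero h (add_eq_left.mp (by rw [← G.d_comp μ a h, he]))

lemma not_isVertex_comp {μ a : G.Path} (h : G.s μ = G.r a) (hμ : ¬ G.IsVertex μ) :
    ¬ G.IsVertex (G.comp μ a) := fun hv =>
  hμ (add_eq_zero.mp ((G.d_comp μ a h).symm.trans hv)).1

lemma eq_and_eq_of_comp_eq {μ α μ' α' : G.Path} (h : G.s μ = G.r α) (h' : G.s μ' = G.r α')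
    (hd : G.d μ = G.d μ') (he : G.comp μ α = G.comp μ' α') : μ = μ' ∧ α = α' := by
  have hdα : G.d α = G.d α' := add_left_cancel <| by
    rw [← G.d_comp μ α h, he, G.d_comp μ' α' h', hd]
  have e := (G.factor (G.comp μ α) (G.d μ) (G.d α) (G.d_comp μ α h)).unique
    (y₁ := (μ, α)) (y₂ := (μ', α')) ⟨rfl, rfl, h, rfl⟩ ⟨hd.symm, hdα.symm, h', he.symm⟩
  exact Prod.ext_iff.mp e

lemma comp_left_cancel {μ α β : G.Path} (hα : G.s μ = G.r α) (hβ : G.s μ = G.r β)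
    (h : G.comp μ α = G.comp μ β) : α = β :=
  (eq_and_eq_of_comp_eq hα hβ rfl h).2

lemma exists_comp_eq_of_le (τ : G.Path) {n : Fin k → ℕ} (hn : n ≤ G.d τ) :
    ∃ ζ η, G.d ζ = n ∧ G.s ζ = G.r η ∧ G.comp ζ η = τ := by
  obtain ⟨⟨ζ, η⟩, ⟨hζ, -, hs, hc⟩, -⟩ := G.factor τ n (G.d τ - n) (add_tsub_cancel_of_le hn).symm
  exact ⟨ζ, η, hζ, hs, hc⟩

lemma exists_comp_eq_of_comp_eq_of_le {μ β ζ η : G.Path} (hβ : G.s μ = G.r β)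
    (hη : G.s ζ = G.r η) (h : G.comp ζ η = G.comp μ β) (hd : G.d μ ≤ G.d ζ) :
    ∃ α, G.s μ = G.r α ∧ G.comp μ α = ζ := by
  obtain ⟨μ₁, α, hμ₁, hμ₁α, rfl⟩ := exists_comp_eq_of_le ζ hd
  have hαη : G.s α = G.r η := by rwa [← G.s_comp μ₁ α hμ₁α]
  have hμ₁αη : G.s μ₁ = G.r (G.comp α η) := by rw [G.r_comp α η hαη, hμ₁α]
  obtain ⟨rfl, -⟩ := eq_and_eq_of_comp_eq hμ₁αη hβ hμ₁
    (by rw [← G.comp_assoc μ₁ α η hμ₁α hαη, h])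
  exact ⟨α, hμ₁α, rfl⟩

lemma MCE_comm (μ ν : G.Path) : G.MCE μ ν = G.MCE ν μ := by
  ext l
  simp only [MCE, Set.mem_ofPred_eq, sup_comm (G.d μ), and_comm (a := ∃ α, _ ∧ G.comp μ α = l)]

lemma eq_of_mem_MCE_of_d_eq {α β l : G.Path} (hd : G.d α = G.d β) (h : l ∈ G.MCE α β) :
    α = β := by
  obtain ⟨hl, ⟨a, ha, rfl⟩, ⟨b, hb, hab⟩⟩ := h
  rw [← hd, sup_idem] at hl
  have ha0 : G.d a = 0 := add_eq_left.mp (by rw [← G.d_comp α a ha, hl])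
  have hb0 : G.d b = 0 := add_eq_left.mp (by rw [← G.d_comp β b hb, hab, hl, hd])
  rw [eq_s_of_d_eq_zero ha ha0, eq_s_of_d_eq_zero hb hb0, G.comp_id, G.comp_id] at hab
  exact hab.symm

lemma exists_mem_MCE_of_comp_eq {μ ν β γ : G.Path} (hβ : G.s μ = G.r β) (hγ : G.s ν = G.r γ)
    (h : G.comp μ β = G.comp ν γ) :
    ∃ ρ ∈ G.MCE μ ν, ∃ η, G.s ρ = G.r η ∧ G.comp ρ η = G.comp μ β := by
  have hμ : G.d μ ≤ G.d (G.comp μ β) := by rw [G.d_comp μ β hβ]; exact le_self_add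
  have hν : G.d ν ≤ G.d (G.comp μ β) := by rw [h, G.d_comp ν γ hγ]; exact le_self_add
  obtain ⟨ρ, η, hρ, hρη, hc⟩ := exists_comp_eq_of_le (G.comp μ β) (sup_le hμ hν)
  exact ⟨ρ, ⟨hρ, exists_comp_eq_of_comp_eq_of_le hβ hρη hc (hρ ▸ le_sup_left),
    exists_comp_eq_of_comp_eq_of_le hγ hρη (hc.trans h) (hρ ▸ le_sup_right)⟩, η, hρη, hc⟩

lemma Ext_finite (hFA : G.FinitelyAligned) (μ : G.Path) {F : Set G.Path} (hF : F.Finite) :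
    (G.Ext μ F).Finite := by
  refine Set.Finite.of_finite_image ?_ fun α hα β hβ h => comp_left_cancel hα.1 hβ.1 h
  refine (hF.biUnion fun ν _ => hFA μ ν).subset ?_
  rintro _ ⟨α, ⟨-, ν, hν, hα⟩, rfl⟩
  exact Set.mem_biUnion hν hα

lemma ExtIn_subset_Ext (W : Set G.Path) (μ : G.Path) (F : Set G.Path) :
    G.ExtIn W μ F ⊆ G.Ext μ F := fun _ ⟨h, ν, hν, hα, _⟩ => ⟨h, ν, hν, hα⟩

lemma Ext_insert (μ ν : G.Path) (F : Set G.Path) :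
    G.Ext μ (insert ν F) = G.Ext μ {ν} ∪ G.Ext μ F := by
  ext α
  simp only [Ext, Set.mem_ofPred_eq, Set.mem_union, Set.exists_mem_insert,
    Set.mem_singleton_iff, exists_eq_left, and_or_left]

lemma ExhaustiveIn.mono {W E E' : Set G.Path} {v : G.Path} (h : G.ExhaustiveIn W v E)
    (hE : E ⊆ E') : G.ExhaustiveIn W v E' := fun l hl hr =>
  (h l hl hr).imp fun _ hμ => ⟨hE hμ.1, hμ.2⟩

/-- The paths of the sub-`k`-graph `Λ \ ΛH`. -/
def avoiding (H : Set G.Path) : Set G.Path := {l | G.s l ∉ H}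

section Hereditary

variable {H : Set G.Path}

lemma comp_mem_avoiding_iff {μ ν : G.Path} (h : G.s μ = G.r ν) :
    G.comp μ ν ∈ G.avoiding H ↔ ν ∈ G.avoiding H := by
  simp only [avoiding, Set.mem_ofPred_eq, G.s_comp μ ν h]

variable (hH : ∀ l, G.r l ∈ H → G.s l ∈ H)
include hH

lemma mem_avoiding_of_comp_mem {μ ν : G.Path} (h : G.s μ = G.r ν)
    (hc : G.comp μ ν ∈ G.avoiding H) : μ ∈ G.avoiding H := fun hμ =>
  (comp_mem_avoiding_iff h).1 hc (hH ν (h ▸ hμ))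

lemma exists_mem_MCE_avoiding_of_comp_eq {μ ν β γ : G.Path} (hβ : G.s μ = G.r β)
    (hγ : G.s ν = G.r γ) (h : G.comp μ β = G.comp ν γ) (hW : G.comp μ β ∈ G.avoiding H) :
    ∃ ρ ∈ G.MCE μ ν ∩ G.avoiding H, ∃ η, G.s ρ = G.r η ∧ G.comp ρ η = G.comp μ β := by
  obtain ⟨ρ, hρ, η, hρη, hc⟩ := exists_mem_MCE_of_comp_eq hβ hγ h
  exact ⟨ρ, ⟨hρ, mem_avoiding_of_comp_mem hH hρη (hc ▸ hW)⟩, η, hρη, hc⟩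

lemma MCE_inter_avoiding_nonempty {μ ν β γ : G.Path} (hβ : G.s μ = G.r β)
    (hγ : G.s ν = G.r γ) (h : G.comp μ β = G.comp ν γ) (hW : G.comp μ β ∈ G.avoiding H) :
    (G.MCE μ ν ∩ G.avoiding H).Nonempty :=
  let ⟨ρ, hρ, _⟩ := exists_mem_MCE_avoiding_of_comp_eq hH hβ hγ h hW
  ⟨ρ, hρ⟩

lemma exhaustiveIn_ExtIn {F : Set G.Path} {v l : G.Path}
    (hF : G.ExhaustiveIn (G.avoiding H) v F) (hrl : G.r l = v) :
    G.ExhaustiveIn (G.avoiding H) (G.s l) (G.ExtIn (G.avoiding H) l F) := by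
  intro m hm hrm
  have hlm : G.s l = G.r m := hrm.symm
  obtain ⟨ν, hν, τ, ⟨-, ⟨β, hβ, hτβ⟩, ⟨γ, hγ, hτγ⟩⟩, hτ⟩ :=
    hF (G.comp l m) ((comp_mem_avoiding_iff hlm).2 hm) (by rw [G.r_comp l m hlm, hrl])
  have hmβ : G.s m = G.r β := by rwa [← G.s_comp l m hlm]
  have hlmβ : G.s l = G.r (G.comp m β) := by rw [G.r_comp m β hmβ, hlm]
  have hτ' : G.comp l (G.comp m β) = τ := by rw [← G.comp_assoc l m β hlm hmβ, hτβ]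
  obtain ⟨ρ, ⟨hρ, hρW⟩, η, hρη, hρc⟩ := exists_mem_MCE_avoiding_of_comp_eq hH hlmβ hγ
    (hτ'.trans hτγ.symm) (hτ' ▸ hτ)
  obtain ⟨α, hlα, rfl⟩ := hρ.2.1
  have hαη : G.s α = G.r η := by rwa [← G.s_comp l α hlα]
  have hlαη : G.s l = G.r (G.comp α η) := by rw [G.r_comp α η hαη, hlα]
  have hmβαη : G.comp m β = G.comp α η := comp_left_cancel hlmβ hlαη
    (by rw [← G.comp_assoc l α η hlα hαη, hρc])
  refine ⟨α, ⟨hlα, ν, hν, hρ, hρW⟩, MCE_inter_avoiding_nonempty hH hmβ hαη hmβαη ?_⟩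
  exact (comp_mem_avoiding_iff hlmβ).1 (hτ' ▸ hτ)

lemma exhaustiveIn_diff_comp {F : Set G.Path} {v μ μ' : G.Path}
    (hF : G.ExhaustiveIn (G.avoiding H) v F) (hμ : μ ∈ F) (hμμ' : G.s μ = G.r μ')
    (hne : μ ≠ G.comp μ μ') :
    G.ExhaustiveIn (G.avoiding H) v (F \ {G.comp μ μ'}) := by
  intro m hm hrm
  obtain ⟨ν, hν, τ, hτmce, hτ⟩ := hF m hm hrm
  by_cases hνμ : ν = G.comp μ μ'
  · subst hνμ
    obtain ⟨-, ⟨β, hβ, hτβ⟩, ⟨γ, hγ, hτγ⟩⟩ := hτmce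
    have hμ'γ : G.s μ' = G.r γ := by rwa [← G.s_comp μ μ' hμμ']
    refine ⟨μ, ⟨hμ, hne⟩, MCE_inter_avoiding_nonempty hH hβ
      (show G.s μ = G.r (G.comp μ' γ) by rw [G.r_comp μ' γ hμ'γ, hμμ']) ?_ (hτβ ▸ hτ)⟩
    rw [hτβ, ← hτγ, G.comp_assoc μ μ' γ hμμ' hμ'γ]
  · exact ⟨ν, ⟨hν, hνμ⟩, τ, hτmce, hτ⟩

lemma exhaustiveIn_diff_union_image {F E : Set G.Path} {v μ : G.Path}
    (hF : G.ExhaustiveIn (G.avoiding H) v F) (hE : G.ExhaustiveIn (G.avoiding H) (G.s μ) E)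
    (hrE : ∀ ε ∈ E, G.r ε = G.s μ) :
    G.ExhaustiveIn (G.avoiding H) v ((F \ {μ}) ∪ G.comp μ '' E) := by
  intro m hm hrm
  obtain ⟨ν, hν, τ, hτmce, hτ⟩ := hF m hm hrm
  by_cases hνμ : ν = μ
  · subst hνμ
    obtain ⟨-, ⟨β, hβ, hτβ⟩, ⟨γ, hγ, hτγ⟩⟩ := hτmce
    have hγW : γ ∈ G.avoiding H := (comp_mem_avoiding_iff hγ).1 (hτγ ▸ hτ)
    obtain ⟨ε, hε, ζ, ⟨-, ⟨a, hγa, rfl⟩, ⟨b, hεb, hζ⟩⟩, hζW⟩ := hE γ hγW hγ.symm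
    have hνε : G.s ν = G.r ε := (hrE ε hε).symm
    have hβa : G.s β = G.r a := by
      rw [← G.s_comp m β hβ, hτβ, ← hτγ, G.s_comp ν γ hγ, hγa]
    have hνγa : G.s ν = G.r (G.comp γ a) := by rw [G.r_comp γ a hγa, hγ]
    have hmβa : G.comp m (G.comp β a) = G.comp ν (G.comp γ a) := by
      rw [← G.comp_assoc m β a hβ hβa, hτβ, ← hτγ, G.comp_assoc ν γ a hγ hγa]
    refine ⟨G.comp ν ε, Or.inr ⟨ε, hε, rfl⟩, MCE_inter_avoiding_nonempty hH
      (show G.s m = G.r (G.comp β a) by rw [G.r_comp β a hβa, hβ])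
      (show G.s (G.comp ν ε) = G.r b by rw [G.s_comp ν ε hνε, hεb]) ?_ ?_⟩
    · rw [hmβa, ← hζ, G.comp_assoc ν ε b hνε hεb]
    · rw [hmβa]
      exact (comp_mem_avoiding_iff hνγa).2 hζW
  · exact ⟨ν, Or.inl ⟨hν, hνμ⟩, τ, hτmce, hτ⟩

end Hereditary

end Combinatorics

section TCK

variable {A : Type*} [NonUnitalNormedRing A] [StarRing A]
  {t : G.Path → A}

/-- The range projection `q_λ`. -/
def rangeProj (t : G.Path → A) (l : G.Path) : A := t l * star (t l)

lemma star_rangeProj (l : G.Path) : star (rangeProj t l) = rangeProj t l := by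
  simp [rangeProj, star_mul]

variable [NormedSpace ℂ A] {σ : G.Cocycle}

namespace IsTCK

variable (ht : G.IsTCK σ t)
include ht

lemma star_vertex {v : G.Path} (hv : G.IsVertex v) : star (t v) = t v := (ht.1 v hv).1

lemma vertex_mul_self {v : G.Path} (hv : G.IsVertex v) : t v * t v = t v := (ht.1 v hv).2

lemma mul_eq_smul_comp {μ ν : G.Path} (h : G.s μ = G.r ν) :
    t μ * t ν = σ.c μ ν • t (G.comp μ ν) :=
  ht.2.2.1 μ ν h

lemma star_mul_self (l : G.Path) : star (t l) * t l = t (G.s l) := ht.2.2.2.1 l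

lemma rangeProj_mul_rangeProj (μ ν : G.Path) {F : Finset G.Path}
    (hF : (F : Set G.Path) = G.MCE μ ν) :
    rangeProj t μ * rangeProj t ν = ∑ l ∈ F, rangeProj t l :=
  ht.2.2.2.2 μ ν F hF

lemma r_mul {l v : G.Path} (hr : G.r l = v) : t v * t l = t l := by
  have hrr : G.s (G.r l) = G.r l := G.s_of_vertex _ (G.d_r l)
  rw [← hr, ht.mul_eq_smul_comp hrr, G.id_comp, σ.left_id, one_smul]

lemma mul_s (l : G.Path) : t l * t (G.s l) = t l := by
  rw [ht.mul_eq_smul_comp (G.r_of_vertex _ (G.d_s l)).symm, G.comp_id, σ.right_id, one_smul]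

lemma rangeProj_vertex {v : G.Path} (hv : G.IsVertex v) : rangeProj t v = t v := by
  rw [rangeProj, ht.star_vertex hv, ht.vertex_mul_self hv]

lemma rangeProj_mul_self (l : G.Path) : rangeProj t l * t l = t l := by
  rw [rangeProj, mul_assoc, ht.star_mul_self, ht.mul_s]

lemma rangeProj_idem (l : G.Path) : rangeProj t l * rangeProj t l = rangeProj t l := by
  rw [rangeProj, ← mul_assoc, ← rangeProj, ht.rangeProj_mul_self, rangeProj]

lemma star_mul_r {l v : G.Path} (hr : G.r l = v) (hv : G.IsVertex v) :
    star (t l) * t v = star (t l) := by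
  simpa [star_mul, ht.star_vertex hv] using congrArg star (ht.r_mul hr)

lemma r_mul_rangeProj {l v : G.Path} (hr : G.r l = v) : t v * rangeProj t l = rangeProj t l := by
  rw [rangeProj, ← mul_assoc, ht.r_mul hr]

lemma rangeProj_mul_r {l v : G.Path} (hr : G.r l = v) (hv : G.IsVertex v) :
    rangeProj t l * t v = rangeProj t l := by
  rw [rangeProj, mul_assoc, ht.star_mul_r hr hv]

lemma rangeProj_comm (hFA : G.FinitelyAligned) (μ ν : G.Path) :
    Commute (rangeProj t μ) (rangeProj t ν) :=
  (ht.rangeProj_mul_rangeProj μ ν (hFA μ ν).coe_toFinset).trans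
    (ht.rangeProj_mul_rangeProj ν μ (by rw [Set.Finite.coe_toFinset, MCE_comm])).symm

lemma rangeProj_mul_rangeProj_of_d_eq {α β : G.Path} (hd : G.d α = G.d β) (hne : α ≠ β) :
    rangeProj t α * rangeProj t β = 0 := by
  rw [ht.rangeProj_mul_rangeProj α β (F := ∅) ?_, Finset.sum_empty]
  ext l
  simpa using fun hl => hne (eq_of_mem_MCE_of_d_eq hd hl)

lemma star_mul_mul_mul_of_commute {μ : G.Path} {x y : A} (hy : Commute (rangeProj t μ) y) :
    star (t μ) * (x * y) * t μ = (star (t μ) * x * t μ) * (star (t μ) * y * t μ) := by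
  calc star (t μ) * (x * y) * t μ = star (t μ) * x * (y * (rangeProj t μ * t μ)) := by
        rw [ht.rangeProj_mul_self]; simp only [mul_assoc]
    _ = star (t μ) * x * (rangeProj t μ * y * t μ) := by rw [← mul_assoc y, ← hy.eq, mul_assoc]
    _ = (star (t μ) * x * t μ) * (star (t μ) * y * t μ) := by simp only [rangeProj, mul_assoc]

lemma sub_rangeProj_idem {v a : G.Path} (hv : G.IsVertex v) (ha : G.r a = v) :
    (rangeProj t v - rangeProj t a) * (rangeProj t v - rangeProj t a) =
      rangeProj t v - rangeProj t a := by
  rw [sub_mul, mul_sub, mul_sub, ht.rangeProj_idem, ht.rangeProj_idem, ht.rangeProj_vertex hv,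
    ht.r_mul_rangeProj ha, ht.rangeProj_mul_r ha hv]
  abel

lemma sub_rangeProj_add_conj_mul {v μ : G.Path} (hv : G.IsVertex v) (hrμ : G.r μ = v)
    {a b : A} (ha : a * t (G.s μ) = a) :
    (rangeProj t v - rangeProj t μ + t μ * a * star (t μ)) *
        (rangeProj t v - rangeProj t μ + t μ * b * star (t μ)) =
      rangeProj t v - rangeProj t μ + t μ * (a * b) * star (t μ) := by
  have hPt : (rangeProj t v - rangeProj t μ) * t μ = 0 := by
    rw [sub_mul, ht.rangeProj_vertex hv, ht.r_mul hrμ, ht.rangeProj_mul_self, sub_self]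
  have htP : star (t μ) * (rangeProj t v - rangeProj t μ) = 0 := by
    simpa [star_sub, star_rangeProj] using congrArg star hPt
  have hab : t μ * a * star (t μ) * (t μ * b * star (t μ)) = t μ * (a * b) * star (t μ) := by
    calc t μ * a * star (t μ) * (t μ * b * star (t μ))
        = t μ * (a * (star (t μ) * t μ) * b) * star (t μ) := by simp only [mul_assoc]
      _ = t μ * (a * b) * star (t μ) := by rw [ht.star_mul_self, ha]
  rw [add_mul, mul_add, mul_add, ht.sub_rangeProj_idem hv hrμ, hab,
    show (rangeProj t v - rangeProj t μ) * (t μ * b * star (t μ)) = 0 by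
      rw [← mul_assoc, ← mul_assoc, hPt, zero_mul, zero_mul],
    show t μ * a * star (t μ) * (rangeProj t v - rangeProj t μ) = 0 by
      rw [mul_assoc, htP, mul_zero]]
  abel

lemma delta_pairwise (hFA : G.FinitelyAligned) (v : G.Path) (F : Finset G.Path) :
    (F : Set G.Path).Pairwise (Function.onFun Commute fun l =>
      ((rangeProj t v - rangeProj t l : A) : Unitization ℂ A)) := by
  intro a _ b _ _
  have hv := ht.rangeProj_comm hFA v
  have ha := ht.rangeProj_comm hFA a
  exact (((hv v).sub_left (ha v)).sub_right ((hv b).sub_left (ha b))).map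
    (Unitization.inrNonUnitalAlgHom ℂ A)

end IsTCK

end TCK

section Delta

open scoped Classical

variable {A : Type*} [NonUnitalNormedRing A] [StarRing A]
  [NormedSpace ℂ A] [IsScalarTower ℂ A A] [SMulCommClass ℂ A A]
  {σ : G.Cocycle} {t : G.Path → A}

namespace IsTCK

variable (ht : G.IsTCK σ t)
include ht

variable (hFA : G.FinitelyAligned)
include hFA

lemma coe_delta (v : G.Path) (F : Finset G.Path) :
    ((G.Delta t v F : A) : Unitization ℂ A) = ((rangeProj t v : A) : Unitization ℂ A) *
      F.noncommProd (fun l => ((rangeProj t v - rangeProj t l : A) : Unitization ℂ A))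
        (ht.delta_pairwise hFA v F) := by
  rw [Delta, dif_pos]
  · ext <;> simp [rangeProj]
  · exact ht.delta_pairwise hFA v F

lemma delta_empty (v : G.Path) : G.Delta t v ∅ = rangeProj t v :=
  Unitization.inr_injective (R := ℂ) (by rw [ht.coe_delta hFA, Finset.noncommProd_empty, mul_one])

lemma delta_insert {l : G.Path} {F : Finset G.Path} (v : G.Path) (hl : l ∉ F) :
    G.Delta t v (insert l F) = (rangeProj t v - rangeProj t l) * G.Delta t v F := by
  apply Unitization.inr_injective (R := ℂ)
  rw [Unitization.inr_mul, ht.coe_delta hFA, ht.coe_delta hFA,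
    Finset.noncommProd_insert_of_notMem _ _ _ _ hl, ← mul_assoc, ← mul_assoc,
    ← Unitization.inr_mul, ← Unitization.inr_mul,
    ((ht.rangeProj_comm hFA v v).sub_right (ht.rangeProj_comm hFA v l)).eq]

lemma rangeProj_commute_delta (μ v : G.Path) (F : Finset G.Path) :
    Commute (rangeProj t μ) (G.Delta t v F) := by
  induction F using Finset.induction_on with
  | empty => rw [ht.delta_empty hFA]; exact ht.rangeProj_comm hFA μ v
  | insert _ _ hl ih =>
    rw [ht.delta_insert hFA _ hl]
    exact ((ht.rangeProj_comm hFA μ v).sub_right (ht.rangeProj_comm hFA μ _)).mul_right ih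

lemma delta_mul_vertex {v : G.Path} (hv : G.IsVertex v) {F : Finset G.Path}
    (hr : ∀ l ∈ F, G.r l = v) : G.Delta t v F * t v = G.Delta t v F := by
  induction F using Finset.induction_on with
  | empty => rw [ht.delta_empty hFA, ht.rangeProj_vertex hv, ht.vertex_mul_self hv]
  | insert _ _ hl ih =>
    rw [ht.delta_insert hFA _ hl, mul_assoc,
      ih fun l hl' => hr l (Finset.mem_insert_of_mem hl')]

lemma sub_rangeProj_mul_delta {v x a : G.Path} {F : Finset G.Path} (ha : a ∈ F)
    (hxa : (rangeProj t v - rangeProj t x) * (rangeProj t v - rangeProj t a) =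
      rangeProj t v - rangeProj t a) :
    (rangeProj t v - rangeProj t x) * G.Delta t v F = G.Delta t v F := by
  rw [← Finset.insert_erase ha, ht.delta_insert hFA _ (Finset.notMem_erase a F), ← mul_assoc, hxa]

lemma delta_mul_delta {v : G.Path} (hv : G.IsVertex v) {E E' : Finset G.Path}
    (hrE : ∀ l ∈ E, G.r l = v) (hrE' : ∀ l ∈ E', G.r l = v) :
    G.Delta t v E * G.Delta t v E' = G.Delta t v (E ∪ E') := by
  induction E' using Finset.induction_on with
  | empty =>
    rw [Finset.union_empty, ht.delta_empty hFA, ht.rangeProj_vertex hv,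
      ht.delta_mul_vertex hFA hv hrE]
  | @insert a E'' ha ih =>
    have hra : G.r a = v := hrE' a (Finset.mem_insert_self a E'')
    rw [ht.delta_insert hFA _ ha, ← mul_assoc,
      ← ((ht.rangeProj_commute_delta hFA v v E).sub_left
        (ht.rangeProj_commute_delta hFA a v E)).eq,
      mul_assoc, ih fun l hl => hrE' l (Finset.mem_insert_of_mem hl), Finset.union_insert]
    by_cases haE : a ∈ E ∪ E''
    · rw [Finset.insert_eq_self.mpr haE,
        ht.sub_rangeProj_mul_delta hFA haE (ht.sub_rangeProj_idem hv hra)]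
    · rw [ht.delta_insert hFA _ haE]

lemma delta_eq_sub_sum {v : G.Path} (hv : G.IsVertex v) {E : Finset G.Path}
    (hr : ∀ l ∈ E, G.r l = v)
    (horth : (E : Set G.Path).Pairwise fun a b => rangeProj t a * rangeProj t b = 0) :
    G.Delta t v E = t v - ∑ a ∈ E, rangeProj t a := by
  induction E using Finset.induction_on with
  | empty => rw [ht.delta_empty hFA, ht.rangeProj_vertex hv, Finset.sum_empty, sub_zero]
  | @insert a E' ha ih =>
    have hra : G.r a = v := hr a (Finset.mem_insert_self a E')
    have hsum : rangeProj t a * ∑ b ∈ E', rangeProj t b = 0 := by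
      rw [Finset.mul_sum]
      exact Finset.sum_eq_zero fun b hb => horth (Finset.mem_insert_self a E')
        (Finset.mem_insert_of_mem hb) (ne_of_mem_of_not_mem hb ha).symm
    rw [ht.delta_insert hFA _ ha, ih (fun l hl => hr l (Finset.mem_insert_of_mem hl))
      (horth.mono (by simp)), ht.rangeProj_vertex hv, Finset.sum_insert ha, mul_sub, sub_mul,
      sub_mul, ht.vertex_mul_self hv, ht.rangeProj_mul_r hra hv, hsum, Finset.mul_sum,
      Finset.sum_congr rfl fun b hb => ht.r_mul_rangeProj (hr b (Finset.mem_insert_of_mem hb))]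
    abel

end IsTCK

end Delta

section Conjugation

open scoped Classical

variable {A : Type*} [NonUnitalNormedRing A] [StarRing A]
  [NormedSpace ℂ A] [IsScalarTower ℂ A A] [SMulCommClass ℂ A A] [StarModule ℂ A]
  {σ : G.Cocycle} {t : G.Path → A}

lemma mem_adjoin_range (l : G.Path) : t l ∈ NonUnitalStarAlgebra.adjoin ℂ (Set.range t) :=
  NonUnitalStarAlgebra.subset_adjoin ℂ _ ⟨l, rfl⟩

lemma rangeProj_mem_adjoin_range (l : G.Path) :
    rangeProj t l ∈ NonUnitalStarAlgebra.adjoin ℂ (Set.range t) :=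
  mul_mem (mem_adjoin_range l) (star_mem (mem_adjoin_range l))

namespace IsTCK

variable (ht : G.IsTCK σ t)
include ht

lemma rangeProj_comp {μ α : G.Path} (h : G.s μ = G.r α) :
    rangeProj t (G.comp μ α) = t μ * rangeProj t α * star (t μ) := by
  have hc : σ.c μ α * star (σ.c μ α) = 1 := by
    rw [Complex.star_def, Complex.mul_conj, Complex.normSq_eq_norm_sq, σ.norm_one μ α h]
    norm_num
  have key : t μ * t α * star (t μ * t α) = rangeProj t (G.comp μ α) := by
    rw [ht.mul_eq_smul_comp h, star_smul, smul_mul_smul_comm, hc, one_smul, rangeProj]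
  rw [← key, star_mul, rangeProj]
  simp only [mul_assoc]

lemma star_mul_rangeProj_comp_mul {μ α : G.Path} (h : G.s μ = G.r α) :
    star (t μ) * rangeProj t (G.comp μ α) * t μ = rangeProj t α := by
  rw [ht.rangeProj_comp h, ← mul_assoc, ← mul_assoc, ht.star_mul_self, mul_assoc,
    ht.star_mul_self, ht.r_mul_rangeProj h.symm, ht.rangeProj_mul_r h.symm (isVertex_s μ)]

lemma rangeProj_comp_mul_rangeProj {μ α : G.Path} (h : G.s μ = G.r α) :
    rangeProj t (G.comp μ α) * rangeProj t μ = rangeProj t (G.comp μ α) := by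
  rw [ht.rangeProj_comp h]
  calc t μ * rangeProj t α * star (t μ) * (t μ * star (t μ))
      = t μ * (rangeProj t α * (star (t μ) * t μ)) * star (t μ) := by simp only [mul_assoc]
    _ = t μ * rangeProj t α * star (t μ) := by
      rw [ht.star_mul_self, ht.rangeProj_mul_r h.symm (isVertex_s μ)]

lemma star_mul_rangeProj_mul (μ ν : G.Path) {E : Finset G.Path}
    (hE : (E : Set G.Path) = G.Ext μ {ν}) :
    star (t μ) * rangeProj t ν * t μ = ∑ α ∈ E, rangeProj t α := by
  have hrE : ∀ α ∈ E, G.s μ = G.r α := fun α hα =>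
    (show α ∈ G.Ext μ {ν} from hE ▸ Finset.mem_coe.2 hα).1
  have hM : ((E.image (G.comp μ) : Finset G.Path) : Set G.Path) = G.MCE ν μ := by
    rw [Finset.coe_image, hE, MCE_comm]
    ext ρ
    constructor
    · rintro ⟨α, ⟨-, _, rfl, hα⟩, rfl⟩
      exact hα
    · intro hρ
      obtain ⟨α, hα, rfl⟩ := hρ.2.1
      exact ⟨α, ⟨hα, ν, rfl, hρ⟩, rfl⟩
  calc star (t μ) * rangeProj t ν * t μ
      = star (t μ) * (rangeProj t ν * rangeProj t μ) * t μ := by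
        simp only [mul_assoc, ht.rangeProj_mul_self]
    _ = ∑ α ∈ E, star (t μ) * rangeProj t (G.comp μ α) * t μ := by
        rw [ht.rangeProj_mul_rangeProj ν μ hM, Finset.mul_sum, Finset.sum_mul,
          Finset.sum_image fun α hα β hβ h => comp_left_cancel (hrE α hα) (hrE β hβ) h]
    _ = ∑ α ∈ E, rangeProj t α :=
        Finset.sum_congr rfl fun α hα => ht.star_mul_rangeProj_comp_mul (hrE α hα)

variable (hFA : G.FinitelyAligned)
include hFA

lemma star_mul_sub_rangeProj_mul {μ ν v : G.Path} (hv : G.IsVertex v) (hrμ : G.r μ = v)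
    {E : Finset G.Path} (hE : (E : Set G.Path) = G.Ext μ {ν}) :
    star (t μ) * (rangeProj t v - rangeProj t ν) * t μ = G.Delta t (G.s μ) E := by
  have hrE : ∀ α ∈ E, G.s μ = G.r α := fun α hα =>
    (show α ∈ G.Ext μ {ν} from hE ▸ Finset.mem_coe.2 hα).1
  have hdE : ∀ α ∈ E, G.d μ + G.d α = G.d μ ⊔ G.d ν := fun α hα => by
    obtain ⟨h, _, rfl, hd, -⟩ := (show α ∈ G.Ext μ {ν} from hE ▸ Finset.mem_coe.2 hα)
    rw [← G.d_comp μ α h, hd]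
  rw [ht.delta_eq_sub_sum hFA (isVertex_s μ) (fun α hα => (hrE α hα).symm)
      fun α hα β hβ hne => ht.rangeProj_mul_rangeProj_of_d_eq
        (add_left_cancel ((hdE α hα).trans (hdE β hβ).symm)) hne,
    ← ht.star_mul_rangeProj_mul μ ν hE, mul_sub, sub_mul, ht.rangeProj_vertex hv,
    ht.star_mul_r hrμ hv, ht.star_mul_self]

lemma star_mul_delta_mul {μ v : G.Path} (hv : G.IsVertex v) (hrμ : G.r μ = v)
    {F E : Finset G.Path} (hr : ∀ l ∈ F, G.r l = v)
    (hE : (E : Set G.Path) = G.Ext μ (F : Set G.Path)) :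
    star (t μ) * G.Delta t v F * t μ = G.Delta t (G.s μ) E := by
  induction F using Finset.induction_on generalizing E with
  | empty =>
    obtain rfl : E = ∅ := Finset.coe_eq_empty.mp (by simp [hE, Ext])
    rw [ht.delta_empty hFA, ht.delta_empty hFA, ht.rangeProj_vertex hv,
      ht.rangeProj_vertex (isVertex_s μ), ht.star_mul_r hrμ hv, ht.star_mul_self]
  | @insert ν F' hν ih =>
    set E₁ := (Ext_finite hFA μ (Set.finite_singleton ν)).toFinset
    set E₂ := (Ext_finite hFA μ F'.finite_toSet).toFinset
    have hE₁ : (E₁ : Set G.Path) = G.Ext μ {ν} := Set.Finite.coe_toFinset _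
    have hE₂ : (E₂ : Set G.Path) = G.Ext μ F' := Set.Finite.coe_toFinset _
    have hrE : ∀ (X : Set G.Path) (E' : Finset G.Path), (E' : Set G.Path) = G.Ext μ X →
        ∀ α ∈ E', G.r α = G.s μ := fun X E' h α hα =>
      (show α ∈ G.Ext μ X from h ▸ Finset.mem_coe.2 hα).1.symm
    have hEu : E = E₁ ∪ E₂ := Finset.coe_injective <| by
      rw [hE, Finset.coe_union, hE₁, hE₂, Finset.coe_insert, Ext_insert]
    rw [ht.delta_insert hFA _ hν, ht.star_mul_mul_mul_of_commute
        (ht.rangeProj_commute_delta hFA μ v F'),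
      ht.star_mul_sub_rangeProj_mul hFA hv hrμ hE₁,
      ih (fun l hl => hr l (Finset.mem_insert_of_mem hl)) hE₂,
      ht.delta_mul_delta hFA (isVertex_s μ) (hrE _ _ hE₁) (hrE _ _ hE₂), hEu]

lemma delta_erase_comp {v μ μ' : G.Path} (hv : G.IsVertex v) (hrμ : G.r μ = v)
    (hμμ' : G.s μ = G.r μ') {F : Finset G.Path} (hμ : μ ∈ F) (hx : G.comp μ μ' ∈ F)
    (hne : μ ≠ G.comp μ μ') :
    G.Delta t v (F.erase (G.comp μ μ')) = G.Delta t v F := by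
  have hrx : G.r (G.comp μ μ') = v := by rw [G.r_comp μ μ' hμμ', hrμ]
  conv_rhs => rw [← Finset.insert_erase hx]
  rw [ht.delta_insert hFA _ (Finset.notMem_erase _ F)]
  refine (ht.sub_rangeProj_mul_delta hFA (Finset.mem_erase.2 ⟨hne, hμ⟩) ?_).symm
  rw [sub_mul, mul_sub, mul_sub, ht.rangeProj_idem, ht.rangeProj_comp_mul_rangeProj hμμ',
    ht.rangeProj_vertex hv, ht.r_mul_rangeProj hrμ, ht.rangeProj_mul_r hrx hv]
  abel

lemma delta_image_comp {v μ : G.Path} (hv : G.IsVertex v) (hrμ : G.r μ = v)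
    {E : Finset G.Path} (hrE : ∀ ε ∈ E, G.r ε = G.s μ) :
    G.Delta t v (E.image (G.comp μ)) =
      rangeProj t v - rangeProj t μ + t μ * G.Delta t (G.s μ) E * star (t μ) := by
  have hqμ : t μ * rangeProj t (G.s μ) * star (t μ) = rangeProj t μ := by
    rw [ht.rangeProj_vertex (isVertex_s μ), ht.mul_s, rangeProj]
  induction E using Finset.induction_on with
  | empty =>
    rw [Finset.image_empty, ht.delta_empty hFA, ht.delta_empty hFA, hqμ, sub_add_cancel]
  | @insert ε E' hε ih =>
    have hμε : G.s μ = G.r ε := (hrE ε (Finset.mem_insert_self ε E')).symm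
    have hrE' : ∀ x ∈ E', G.r x = G.s μ := fun x hx => hrE x (Finset.mem_insert_of_mem hx)
    have hεE' : G.comp μ ε ∉ E'.image (G.comp μ) := fun h => by
      obtain ⟨ε', hε', he⟩ := Finset.mem_image.mp h
      exact hε (comp_left_cancel (hrE' ε' hε').symm hμε he ▸ hε')
    have hq : rangeProj t v - rangeProj t (G.comp μ ε) = rangeProj t v - rangeProj t μ +
        t μ * (rangeProj t (G.s μ) - rangeProj t ε) * star (t μ) := by
      rw [mul_sub, sub_mul, hqμ, ← ht.rangeProj_comp hμε]
      abel
    have hs : (rangeProj t (G.s μ) - rangeProj t ε) * t (G.s μ) =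
        rangeProj t (G.s μ) - rangeProj t ε := by
      rw [sub_mul, ht.rangeProj_mul_r hμε.symm (isVertex_s μ), ht.rangeProj_vertex (isVertex_s μ),
        ht.vertex_mul_self (isVertex_s μ)]
    rw [Finset.image_insert, ht.delta_insert hFA _ hεE', ih hrE', hq,
      ht.sub_rangeProj_add_conj_mul hv hrμ hs, ht.delta_insert hFA _ hε]

end IsTCK

end Conjugation

section Ideal

open scoped Classical

variable {A : Type*} [NonUnitalNormedRing A] [NormedSpace ℂ A]

variable (G) in
/-- The hereditary set `H_I`. -/
def idealVertices (t : G.Path → A) (I : Submodule ℂ A) : Set G.Path :=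
  {w | G.IsVertex w ∧ t w ∈ I}

lemma mem_avoiding_idealVertices_iff {t : G.Path → A} {I : Submodule ℂ A} {l : G.Path} :
    l ∈ G.avoiding (G.idealVertices t I) ↔ t (G.s l) ∉ I := by
  simp [avoiding, idealVertices, isVertex_s]

variable [StarRing A] [IsScalarTower ℂ A A] [SMulCommClass ℂ A A]

variable (G) in
/-- The collection `B_I`. -/
def deltaFEIn (t : G.Path → A) (I : Submodule ℂ A) : Set (Set G.Path) :=
  {E | G.IsFEIn (G.avoiding (G.idealVertices t I)) E ∧
    ∀ (F : Finset G.Path) (v : G.Path), (F : Set G.Path) = E →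
      G.IsVertex v → (∀ μ ∈ E, G.r μ = v) → G.Delta t v F ∈ I}

variable {σ : G.Cocycle} {t : G.Path → A} {I : Submodule ℂ A}

lemma mem_deltaFEIn_of {E : Finset G.Path} {v : G.Path} (hv : G.IsVertex v)
    (hsub : (E : Set G.Path) ⊆ G.avoiding (G.idealVertices t I))
    (hnv : ∀ μ ∈ E, ¬ G.IsVertex μ) (hr : ∀ μ ∈ E, G.r μ = v)
    (hex : G.ExhaustiveIn (G.avoiding (G.idealVertices t I)) v E) (hne : E.Nonempty)
    (hΔ : G.Delta t v E ∈ I) : (E : Set G.Path) ∈ G.deltaFEIn t I := by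
  refine ⟨⟨E.finite_toSet, hsub, hnv, v, hv, hr, hex⟩, fun F w hF _ hw => ?_⟩
  obtain rfl := Finset.coe_injective hF
  obtain ⟨μ, hμ⟩ := hne
  rwa [← hw μ hμ, hr μ hμ]

namespace IsTCK

variable (ht : G.IsTCK σ t)
include ht

/-- For `E = ∅` the condition on `Δ` in `B_I` applies at every vertex `w`, where it says
`t_w = Δ(t)^∅ ∈ I`. -/
lemma nonempty_of_mem_deltaFEIn (hFA : G.FinitelyAligned) {E : Set G.Path}
    (hE : E ∈ G.deltaFEIn t I) {l : G.Path}
    (hl : l ∈ G.avoiding (G.idealVertices t I)) : E.Nonempty := by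
  refine Set.nonempty_iff_ne_empty.2 fun hE0 => mem_avoiding_idealVertices_iff.1 hl ?_
  have h := hE.2 ∅ (G.s l) (by rw [Finset.coe_empty, hE0]) (isVertex_s l) (by simp [hE0])
  rwa [ht.delta_empty hFA, ht.rangeProj_vertex (isVertex_s l)] at h

lemma exhaustiveIn_of_mem_deltaFEIn (hFA : G.FinitelyAligned) {E : Set G.Path}
    (hE : E ∈ G.deltaFEIn t I) {v : G.Path}
    (hr : ∀ μ ∈ E, G.r μ = v) : G.ExhaustiveIn (G.avoiding (G.idealVertices t I)) v E := by
  intro m hm hrm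
  obtain ⟨-, -, -, w, -, hrw, hex⟩ := hE.1
  obtain ⟨μ, hμ⟩ := ht.nonempty_of_mem_deltaFEIn hFA hE hm
  exact hex m hm (hrm.trans ((hr μ hμ).symm.trans (hrw μ hμ)))

variable [StarModule ℂ A]

lemma delta_mem_adjoin (hFA : G.FinitelyAligned) (v : G.Path) (F : Finset G.Path) :
    G.Delta t v F ∈ NonUnitalStarAlgebra.adjoin ℂ (Set.range t) := by
  induction F using Finset.induction_on with
  | empty => rw [ht.delta_empty hFA]; exact rangeProj_mem_adjoin_range v
  | insert _ _ hl ih =>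
    rw [ht.delta_insert hFA _ hl]
    exact mul_mem (sub_mem (rangeProj_mem_adjoin_range _) (rangeProj_mem_adjoin_range _)) ih

variable (hI : ∀ x ∈ NonUnitalStarAlgebra.adjoin ℂ (Set.range t), ∀ y ∈ I, x * y ∈ I ∧ y * x ∈ I)
include hI

lemma rangeProj_mem_of_s_mem {l : G.Path} (hs : t (G.s l) ∈ I) : rangeProj t l ∈ I := by
  have htl : t l ∈ I := ht.mul_s l ▸ (hI _ (mem_adjoin_range l) _ hs).1
  exact (hI _ (star_mem (mem_adjoin_range l)) _ htl).2

lemma idealVertices_hereditary (l : G.Path) (hl : G.r l ∈ G.idealVertices t I) :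
    G.s l ∈ G.idealVertices t I := by
  have htl : t l ∈ I := ht.r_mul rfl ▸ (hI _ (mem_adjoin_range l) _ hl.2).2
  exact ⟨isVertex_s l, ht.star_mul_self l ▸ (hI _ (star_mem (mem_adjoin_range l)) _ htl).1⟩

variable (hFA : G.FinitelyAligned)
include hFA

lemma delta_insert_mem {v l : G.Path} {F : Finset G.Path} (hF : G.Delta t v F ∈ I) :
    G.Delta t v (insert l F) ∈ I := by
  by_cases hl : l ∈ F
  · rwa [Finset.insert_eq_self.mpr hl]
  · rw [ht.delta_insert hFA _ hl]
    exact (hI _ (sub_mem (rangeProj_mem_adjoin_range v) (rangeProj_mem_adjoin_range l)) _ hF).1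

lemma delta_sub_vertex_mem {v : G.Path} (hv : G.IsVertex v) {R : Finset G.Path}
    (hr : ∀ α ∈ R, G.r α = v) (hR : ∀ α ∈ R, rangeProj t α ∈ I) :
    G.Delta t v R - t v ∈ I := by
  induction R using Finset.induction_on with
  | empty => rw [ht.delta_empty hFA, ht.rangeProj_vertex hv, sub_self]; exact zero_mem I
  | @insert a R' ha ih =>
    have key : G.Delta t v (insert a R') - t v =
        (rangeProj t v - rangeProj t a) * (G.Delta t v R' - t v) - rangeProj t a := by
      rw [ht.delta_insert hFA _ ha, mul_sub,
        show (rangeProj t v - rangeProj t a) * t v = t v - rangeProj t a by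
          rw [sub_mul, ht.rangeProj_mul_r (hr a (Finset.mem_insert_self a R')) hv,
            ht.rangeProj_vertex hv, ht.vertex_mul_self hv]]
      abel
    rw [key]
    refine sub_mem (hI _ (sub_mem (rangeProj_mem_adjoin_range v) (rangeProj_mem_adjoin_range a)) _
      (ih (fun α hα => hr α (Finset.mem_insert_of_mem hα))
        fun α hα => hR α (Finset.mem_insert_of_mem hα))).1 (hR a (Finset.mem_insert_self a R'))

lemma delta_mem_of_delta_union_mem {v : G.Path} (hv : G.IsVertex v) {E R : Finset G.Path}
    (hrE : ∀ α ∈ E, G.r α = v) (hrR : ∀ α ∈ R, G.r α = v) (hR : ∀ α ∈ R, rangeProj t α ∈ I)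
    (hER : G.Delta t v (E ∪ R) ∈ I) : G.Delta t v E ∈ I := by
  -- `Δ^R ≡ t_v` modulo `I`, and `t_v` is a right unit for `Δ^E`
  have key : G.Delta t v E =
      G.Delta t v (E ∪ R) - G.Delta t v E * (G.Delta t v R - t v) := by
    rw [mul_sub, ht.delta_mul_delta hFA hv hrE hrR, ht.delta_mul_vertex hFA hv hrE, sub_sub_cancel]
  rw [key]
  exact sub_mem hER
    (hI _ (ht.delta_mem_adjoin hFA v E) _ (ht.delta_sub_vertex_mem hI hFA hv hrR hR)).1

lemma delta_ExtIn_mem {v l : G.Path} (hv : G.IsVertex v) (hrl : G.r l = v)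
    {F E' : Finset G.Path} (hrF : ∀ μ ∈ F, G.r μ = v) (hF : G.Delta t v F ∈ I)
    (hE' : (E' : Set G.Path) = G.ExtIn (G.avoiding (G.idealVertices t I)) l F) :
    G.Delta t (G.s l) E' ∈ I := by
  obtain ⟨E, hE⟩ := (Ext_finite hFA l F.finite_toSet).exists_finset_coe
  have hrE : ∀ α ∈ E, G.r α = G.s l := fun α hα =>
    (show α ∈ G.Ext l F from hE ▸ Finset.mem_coe.2 hα).1.symm
  have hE'E : E' ⊆ E := by
    rw [← Finset.coe_subset, hE, hE']
    exact ExtIn_subset_Ext _ l F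
  refine ht.delta_mem_of_delta_union_mem hI hFA (isVertex_s l) (fun α hα => hrE α (hE'E hα))
    (R := E \ E') (fun α hα => hrE α (Finset.sdiff_subset hα)) ?_ ?_
  · intro α hα
    obtain ⟨hαE, hαE'⟩ := Finset.mem_sdiff.1 hα
    obtain ⟨h, ν, hν, hmce⟩ := (show α ∈ G.Ext l F from hE ▸ Finset.mem_coe.2 hαE)
    refine ht.rangeProj_mem_of_s_mem hI (not_not.1 fun hs => hαE' ?_)
    rw [← Finset.mem_coe, hE']
    exact ⟨h, ν, hν, hmce, (comp_mem_avoiding_iff h).2 (mem_avoiding_idealVertices_iff.2 hs)⟩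
  · rw [Finset.union_sdiff_of_subset hE'E, ← ht.star_mul_delta_mul hFA hv hrl hrF hE]
    exact (hI _ (mem_adjoin_range l) _ (hI _ (star_mem (mem_adjoin_range l)) _ hF).1).2

variable {F : Set G.Path} (hF : F ∈ G.deltaFEIn t I) {v : G.Path} (hv : G.IsVertex v)
  (hrF : ∀ μ ∈ F, G.r μ = v)
include hF hv hrF

lemma insert_mem_deltaFEIn {l : G.Path} (hl : l ∈ G.avoiding (G.idealVertices t I))
    (hrl : G.r l = v) (hlv : l ≠ v) : insert l F ∈ G.deltaFEIn t I := by
  obtain ⟨F, rfl⟩ := hF.1.1.exists_finset_coe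
  rw [← Finset.coe_insert]
  refine mem_deltaFEIn_of hv ?_ ?_ ?_ ?_ (Finset.insert_nonempty l F)
    (ht.delta_insert_mem hI hFA (hF.2 F v rfl hv hrF))
  · rw [Finset.coe_insert]
    exact Set.insert_subset hl hF.1.2.1
  · exact Finset.forall_mem_insert _ _ _ |>.2
      ⟨fun hl' => hlv (hrl ▸ (G.r_of_vertex l hl').symm), hF.1.2.2.1⟩
  · exact Finset.forall_mem_insert _ _ _ |>.2 ⟨hrl, hrF⟩
  · exact (ht.exhaustiveIn_of_mem_deltaFEIn hFA hF hrF).mono (by simp)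

lemma ExtIn_mem_deltaFEIn {l : G.Path} (hl : l ∈ G.avoiding (G.idealVertices t I))
    (hrl : G.r l = v) (hlF : ¬ ∃ μ ∈ F, ∃ μ', G.s μ = G.r μ' ∧ G.comp μ μ' = l) :
    G.ExtIn (G.avoiding (G.idealVertices t I)) l F ∈ G.deltaFEIn t I := by
  set W := G.avoiding (G.idealVertices t I)
  obtain ⟨F, rfl⟩ := hF.1.1.exists_finset_coe
  obtain ⟨E, hE⟩ :=
    ((Ext_finite hFA l F.finite_toSet).subset (ExtIn_subset_Ext W l F)).exists_finset_coe
  have hex := exhaustiveIn_ExtIn (ht.idealVertices_hereditary hI)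
    (ht.exhaustiveIn_of_mem_deltaFEIn hFA hF hrF) hrl
  rw [← hE] at hex ⊢
  refine mem_deltaFEIn_of (isVertex_s l) ?_ ?_ ?_ hex ?_
    (ht.delta_ExtIn_mem hI hFA hv hrl hrF (hF.2 F v rfl hv hrF) hE)
  · rw [hE]
    rintro α ⟨h, -, -, -, hW⟩
    exact (comp_mem_avoiding_iff h).1 hW
  · intro α hα hαv
    obtain ⟨h, ν, hν, ⟨-, -, β, hβ, hνβ⟩, -⟩ :=
      (show α ∈ G.ExtIn W l F from hE ▸ Finset.mem_coe.2 hα)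
    rw [eq_s_of_d_eq_zero h hαv, G.comp_id] at hνβ
    exact hlF ⟨ν, hν, β, hβ, hνβ⟩
  · exact fun α hα => (show α ∈ G.ExtIn W l F from hE ▸ Finset.mem_coe.2 hα).1.symm
  · have hsl : G.s l ∈ W := mem_avoiding_idealVertices_iff.2
      (by rw [G.s_of_vertex _ (isVertex_s l)]; exact mem_avoiding_idealVertices_iff.1 hl)
    obtain ⟨α, hα, -⟩ := hex (G.s l) hsl (G.r_of_vertex _ (isVertex_s l))
    exact ⟨α, hα⟩

lemma diff_comp_mem_deltaFEIn {μ μ' : G.Path} (hμ : μ ∈ F) (hμμ' : G.s μ = G.r μ')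
    (hx : G.comp μ μ' ∈ F) (hμ' : μ' ≠ G.s μ) : F \ {G.comp μ μ'} ∈ G.deltaFEIn t I := by
  have hne : μ ≠ G.comp μ μ' := fun h => hμ' (eq_s_of_comp_eq_self hμμ' h.symm)
  obtain ⟨F, rfl⟩ := hF.1.1.exists_finset_coe
  rw [← Finset.coe_erase]
  refine mem_deltaFEIn_of hv ((Finset.coe_subset.2 (Finset.erase_subset _ F)).trans hF.1.2.1)
    (fun ν hν => hF.1.2.2.1 ν (Finset.mem_of_mem_erase hν))
    (fun ν hν => hrF ν (Finset.mem_of_mem_erase hν)) ?_ ⟨μ, Finset.mem_erase.2 ⟨hne, hμ⟩⟩ ?_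
  · rw [Finset.coe_erase]
    exact exhaustiveIn_diff_comp (ht.idealVertices_hereditary hI)
      (ht.exhaustiveIn_of_mem_deltaFEIn hFA hF hrF) hμ hμμ' hne
  · rw [ht.delta_erase_comp hFA hv (hrF μ hμ) hμμ' hμ hx hne]
    exact hF.2 F v rfl hv hrF

lemma diff_union_image_mem_deltaFEIn {μ : G.Path} (hμ : μ ∈ F) {E : Set G.Path}
    (hE : E ∈ G.deltaFEIn t I) (hrE : ∀ ε ∈ E, G.r ε = G.s μ) :
    (F \ {μ}) ∪ G.comp μ '' E ∈ G.deltaFEIn t I := by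
  obtain ⟨F, rfl⟩ := hF.1.1.exists_finset_coe
  obtain ⟨E, rfl⟩ := hE.1.1.exists_finset_coe
  have hrμ : G.r μ = v := hrF μ hμ
  have hsE : ∀ ε ∈ E, G.s μ = G.r ε := fun ε hε => (hrE ε hε).symm
  have hrF' : ∀ ν ∈ F.erase μ, G.r ν = v := fun ν hν => hrF ν (Finset.mem_of_mem_erase hν)
  have hrE' : ∀ ν ∈ E.image (G.comp μ), G.r ν = v := by
    simp only [Finset.mem_image, forall_exists_index, and_imp, forall_apply_eq_imp_iff₂]
    exact fun ε hε => (G.r_comp μ ε (hsE ε hε)).trans hrμ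
  rw [← Finset.coe_erase, ← Finset.coe_image, ← Finset.coe_union]
  refine mem_deltaFEIn_of hv ?_ ?_ ?_ ?_ ?_ ?_
  · simp only [Finset.coe_union, Finset.coe_erase, Finset.coe_image, Set.union_subset_iff,
      Set.image_subset_iff]
    exact ⟨Set.sdiff_subset.trans hF.1.2.1,
      fun ε hε => (comp_mem_avoiding_iff (hsE ε hε)).2 (hE.1.2.1 hε)⟩
  · simp only [Finset.mem_union, Finset.mem_image]
    rintro _ (hν | ⟨ε, hε, rfl⟩)
    · exact hF.1.2.2.1 _ (Finset.mem_of_mem_erase hν)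
    · exact not_isVertex_comp (hsE ε hε) (hF.1.2.2.1 μ hμ)
  · exact fun ν hν => (Finset.mem_union.1 hν).elim (hrF' ν) (hrE' ν)
  · simp only [Finset.coe_union, Finset.coe_erase, Finset.coe_image]
    exact exhaustiveIn_diff_union_image (ht.idealVertices_hereditary hI)
      (ht.exhaustiveIn_of_mem_deltaFEIn hFA hF hrF) (ht.exhaustiveIn_of_mem_deltaFEIn hFA hE hrE)
      hrE
  · obtain ⟨ε, hε⟩ := ht.nonempty_of_mem_deltaFEIn hFA hE (hF.1.2.1 hμ)
    exact ⟨G.comp μ ε, Finset.mem_union_right _ (Finset.mem_image_of_mem _ hε)⟩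
  · have hΔF : G.Delta t v (F.erase μ) * (rangeProj t v - rangeProj t μ) = G.Delta t v F := by
      rw [← ((ht.rangeProj_commute_delta hFA v v _).sub_left
        (ht.rangeProj_commute_delta hFA μ v _)).eq,
        ← ht.delta_insert hFA _ (Finset.notMem_erase μ F), Finset.insert_erase hμ]
    have hconj : t μ * G.Delta t (G.s μ) E * star (t μ) ∈ I :=
      (hI _ (star_mem (mem_adjoin_range μ)) _
        (hI _ (mem_adjoin_range μ) _ (hE.2 E (G.s μ) rfl (isVertex_s μ) hrE)).1).2
    rw [← ht.delta_mul_delta hFA hv hrF' hrE', ht.delta_image_comp hFA hv hrμ hrE, mul_add, hΔF]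
    exact add_mem (hF.2 F v rfl hv hrF) (hI _ (ht.delta_mem_adjoin hFA v _) _ hconj).1

end IsTCK

end Ideal

end KGraph

theorem stmt10_general {k : ℕ} (G : KGraph k) (hFA : G.FinitelyAligned) (σ : G.Cocycle)
    {A : Type*} [NonUnitalNormedRing A] [StarRing A]
    [NormedSpace ℂ A] [IsScalarTower ℂ A A] [SMulCommClass ℂ A A]
    [StarModule ℂ A]
    (Ε : Set (Set G.Path))
    (t : G.Path → A) (ht : G.IsRelCK σ Ε t)
    (I : Submodule ℂ A)
    (hIabs : ∀ x ∈ G.cstarOf t, ∀ y ∈ I, x * y ∈ I ∧ y * x ∈ I) :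
    ∀ HI W : Set G.Path, HI = {w | G.IsVertex w ∧ t w ∈ I} →
      W = {l | G.s l ∉ HI} →
      G.SatiatedIn W
        {E | G.IsFEIn W E ∧
          ∀ (F : Finset G.Path) (v : G.Path), (F : Set G.Path) = E →
            G.IsVertex v → (∀ μ ∈ E, G.r μ = v) → G.Delta t v F ∈ I} := by
  rintro HI W rfl rfl
  have htck : G.IsTCK σ t := ht.1
  have hI : ∀ x ∈ NonUnitalStarAlgebra.adjoin ℂ (Set.range t), ∀ y ∈ I, x * y ∈ I ∧ y * x ∈ I :=
    fun x hx => hIabs x (subset_closure hx)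
  refine ⟨fun E hE => hE.1, fun F hF v hv hrF => ⟨?_, ?_, ?_, ?_⟩⟩
  · exact fun l hl hrl hlv => htck.insert_mem_deltaFEIn hI hFA hF hv hrF hl hrl hlv
  · exact fun l hl hrl hlF => htck.ExtIn_mem_deltaFEIn hI hFA hF hv hrF hl hrl hlF
  · exact fun μ μ' hμ hμμ' hx hμ' =>
      htck.diff_comp_mem_deltaFEIn hI hFA hF hv hrF hμ hμμ' hx hμ'
  · exact fun μ hμ E hE hrE => htck.diff_union_image_mem_deltaFEIn hI hFA hF hv hrF hμ hE hrE

/-- `B_I = {F ∈ FE(Λ \\ ΛH_I) : Δ(t)^F ∈ I}` is a satiated subset of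
`FE(Λ \\ ΛH_I)`. -/
theorem stmt10 {k : ℕ} (G : KGraph k) (hFA : G.FinitelyAligned) (σ : G.Cocycle)
    {A : Type*} [NonUnitalNormedRing A] [StarRing A] [CStarRing A]
    [NormedSpace ℂ A] [IsScalarTower ℂ A A] [SMulCommClass ℂ A A]
    [StarModule ℂ A] [CompleteSpace A]
    (Ε : Set (Set G.Path)) (hΕ : G.Satiated Ε)
    (t : G.Path → A) (ht : G.IsRelCK σ Ε t)
    (I : Submodule ℂ A) (hIclosed : IsClosed (I : Set A))
    (hIsub : (I : Set A) ⊆ G.cstarOf t)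
    (hIabs : ∀ x ∈ G.cstarOf t, ∀ y ∈ I, x * y ∈ I ∧ y * x ∈ I) :
    ∀ HI W : Set G.Path, HI = {w | G.IsVertex w ∧ t w ∈ I} →
      W = {l | G.s l ∉ HI} →
      G.SatiatedIn W
        {E | G.IsFEIn W E ∧
          ∀ (F : Finset G.Path) (v : G.Path), (F : Set G.Path) = E →
            G.IsVertex v → (∀ μ ∈ E, G.r μ = v) → G.Delta t v F ∈ I} :=
  stmt10_general G hFA σ Ε t ht I hIabs
end

section
/- Let Λ be a finitely aligned k-graph, let b : Λ^0 → ℤ^k satisfy d(λ) = b(s(λ)) − b(r(λ)) for all λ ∈ Λ, let c be a T-valued 2-cocycle on Λ, and let t be a Toeplitz–Cuntz–Krieger (Λ,c)-family in a C*-algebra. If μ, ν, η, ζ ∈ Λ with s(μ) = s(ν) and s(η) = s(ζ), then (t_μ t_ν*)(t_η t_ζ*) lies in the closed linear span of {t_α t_β* : α, β ∈ Λ, s(α) = s(β), b(s(α)) = b(s(μ)) ∨ b(s(η))}. -/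
open scoped BigOperators

/-
`t_ν* t_η = t_ν* (q_ν q_η) t_η = Σ_{λ ∈ MCE(ν,η)} (t_ν* t_λ)(t_λ* t_η)` by (TCK4). Writing
`λ = να = ηβ`, each summand of `t_μ (t_ν* t_η) t_ζ*` is a scalar multiple of `t_{μα} t_{ζβ}*`, and
`b(s(λ)) = b(r(λ)) + (d(ν) ∨ d(η)) = b(s(ν)) ∨ b(s(η))` because `r(ν) = r(λ) = r(η)`.
-/

namespace KGraph

variable {k : ℕ} {G : KGraph k}

theorem Cocycle.conj_mul_self (σ : G.Cocycle) {p q : G.Path} (h : G.s p = G.r q) :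
    starRingEnd ℂ (σ.c p q) * σ.c p q = 1 := by
  rw [Complex.conj_mul', σ.norm_one p q h]
  norm_num

theorem dZ_of_mem_MCE {l ν η : G.Path} (hl : l ∈ G.MCE ν η) : G.dZ l = G.dZ ν ⊔ G.dZ η := by
  funext i
  simp only [dZ, hl.1, Pi.sup_apply, Nat.cast_max]

theorem apply_s_eq_sup_of_mem_MCE (b : G.Path → (Fin k → ℤ))
    (hb : ∀ l : G.Path, G.dZ l = b (G.s l) - b (G.r l)) {l ν η : G.Path}
    (hl : l ∈ G.MCE ν η) : b (G.s l) = b (G.s ν) ⊔ b (G.s η) := by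
  have hdl := dZ_of_mem_MCE hl
  obtain ⟨-, ⟨α, hα, hνα⟩, ⟨β, hβ, hηβ⟩⟩ := hl
  have hrν : G.r l = G.r ν := by rw [← hνα, G.r_comp ν α hα]
  have hrη : G.r l = G.r η := by rw [← hηβ, G.r_comp η β hβ]
  have hs : ∀ x, b (G.s x) = b (G.r x) + G.dZ x := fun x => by rw [hb x]; abel
  rw [hs, hdl, add_sup, hs ν, hs η, ← hrν, ← hrη]

section CStar

variable {A : Type*} [NonUnitalNormedRing A] [StarRing A] [NormedSpace ℂ A] {σ : G.Cocycle} {t : G.Path → A}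

theorem IsTCK.mul_comp (ht : G.IsTCK σ t) {μ ν : G.Path} (h : G.s μ = G.r ν) :
    t μ * t ν = σ.c μ ν • t (G.comp μ ν) :=
  ht.2.2.1 μ ν h

theorem IsTCK.star_mul_self_s13 (ht : G.IsTCK σ t) (l : G.Path) : star (t l) * t l = t (G.s l) :=
  ht.2.2.2.1 l

theorem IsTCK.mul_star_mul_mul_star (ht : G.IsTCK σ t) {μ ν : G.Path} {F : Finset G.Path}
    (hF : (F : Set G.Path) = G.MCE μ ν) :
    (t μ * star (t μ)) * (t ν * star (t ν)) = ∑ l ∈ F, t l * star (t l) :=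
  ht.2.2.2.2 μ ν F hF

theorem IsTCK.mul_s_s13 (ht : G.IsTCK σ t) (l : G.Path) : t l * t (G.s l) = t l := by
  rw [ht.mul_comp (G.r_of_vertex _ (G.d_s l)).symm, G.comp_id, σ.right_id, one_smul]

theorem IsTCK.r_mul_s13 (ht : G.IsTCK σ t) (l : G.Path) : t (G.r l) * t l = t l := by
  rw [ht.mul_comp (G.s_of_vertex _ (G.d_r l)), G.id_comp, σ.left_id, one_smul]

theorem IsTCK.mul_star_mul_self (ht : G.IsTCK σ t) (l : G.Path) :
    t l * star (t l) * t l = t l := by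
  rw [mul_assoc, ht.star_mul_self_s13, ht.mul_s_s13]

theorem IsTCK.star_mul_mul_star (ht : G.IsTCK σ t) (l : G.Path) :
    star (t l) * (t l * star (t l)) = star (t l) := by
  simpa only [star_mul, star_star, mul_assoc] using congrArg star (ht.mul_star_mul_self l)

theorem IsTCK.star_mul_comp [SMulCommClass ℂ A A] (ht : G.IsTCK σ t) {p q : G.Path} (h : G.s p = G.r q) :
    star (t p) * t (G.comp p q) = starRingEnd ℂ (σ.c p q) • t q := by
  have hq : star (t p) * (σ.c p q • t (G.comp p q)) = t q := by
    rw [← ht.mul_comp h, ← mul_assoc, ht.star_mul_self_s13, h, ht.r_mul_s13]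
  rw [← hq, mul_smul_comm, smul_smul, σ.conj_mul_self h, one_smul]

theorem IsTCK.star_comp_mul [SMulCommClass ℂ A A] [StarModule ℂ A] (ht : G.IsTCK σ t) {p q : G.Path} (h : G.s p = G.r q) :
    star (t (G.comp p q)) * t p = σ.c p q • star (t q) := by
  simpa only [star_mul, star_star, star_smul, Complex.star_def, Complex.conj_conj]
    using congrArg star (ht.star_mul_comp h)

theorem IsTCK.star_mul_eq_sum (ht : G.IsTCK σ t) {ν η : G.Path} {F : Finset G.Path}
    (hF : (F : Set G.Path) = G.MCE ν η) :
    star (t ν) * t η = ∑ l ∈ F, star (t ν) * t l * (star (t l) * t η) := by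
  calc star (t ν) * t η
      = star (t ν) * (t ν * star (t ν)) * (t η * star (t η) * t η) := by
        rw [ht.star_mul_mul_star, ht.mul_star_mul_self]
    _ = star (t ν) * ((t ν * star (t ν)) * (t η * star (t η))) * t η := by
        simp only [mul_assoc]
    _ = ∑ l ∈ F, star (t ν) * t l * (star (t l) * t η) := by
        rw [ht.mul_star_mul_mul_star hF, Finset.mul_sum, Finset.sum_mul]
        simp only [mul_assoc]

theorem IsTCK.mul_star_mul_mul_star_eq_sum (ht : G.IsTCK σ t) (μ ζ : G.Path) {ν η : G.Path}
    {F : Finset G.Path} (hF : (F : Set G.Path) = G.MCE ν η) :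
    (t μ * star (t ν)) * (t η * star (t ζ)) =
      ∑ l ∈ F, t μ * (star (t ν) * t l * (star (t l) * t η)) * star (t ζ) := by
  rw [← Finset.sum_mul, ← Finset.mul_sum, ← ht.star_mul_eq_sum hF]
  simp only [mul_assoc]

theorem IsTCK.summand_mem_span [IsScalarTower ℂ A A] [SMulCommClass ℂ A A] [StarModule ℂ A]
    (ht : G.IsTCK σ t) {μ ν η ζ l : G.Path}
    (h1 : G.s μ = G.s ν) (h2 : G.s η = G.s ζ) (hl : l ∈ G.MCE ν η) :
    t μ * (star (t ν) * t l * (star (t l) * t η)) * star (t ζ) ∈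
      Submodule.span ℂ {x : A | ∃ α β : G.Path, G.s α = G.s l ∧ G.s β = G.s l ∧
        x = t α * star (t β)} := by
  obtain ⟨-, ⟨α, hα, rfl⟩, ⟨β, hβ, hνη⟩⟩ := hl
  have hμα : G.s μ = G.r α := h1.trans hα
  have hζβ : G.s ζ = G.r β := h2.symm.trans hβ
  have hβζ : star (t β) * star (t ζ) = starRingEnd ℂ (σ.c ζ β) • star (t (G.comp ζ β)) := by
    rw [← star_mul, ht.mul_comp hζβ, star_smul, Complex.star_def]
  have hsum : t μ * (star (t ν) * t (G.comp ν α) * (star (t (G.comp ν α)) * t η)) * star (t ζ) =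
      (starRingEnd ℂ (σ.c ν α) * σ.c η β * (σ.c μ α * starRingEnd ℂ (σ.c ζ β))) •
        (t (G.comp μ α) * star (t (G.comp ζ β))) := by
    have hassoc : t μ * (t α * star (t β)) * star (t ζ) = t μ * t α * (star (t β) * star (t ζ)) := by
      simp only [mul_assoc]
    rw [ht.star_mul_comp hα, ← hνη, ht.star_comp_mul hβ, smul_mul_smul_comm, mul_smul_comm,
      smul_mul_assoc, hassoc, ht.mul_comp hμα, hβζ, smul_mul_smul_comm, smul_smul]
  rw [hsum]
  refine Submodule.smul_mem _ _ (Submodule.subset_span ⟨G.comp μ α, G.comp ζ β, ?_, ?_, rfl⟩)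
  · rw [G.s_comp μ α hμα, G.s_comp ν α hα]
  · rw [G.s_comp ζ β hζβ, ← hνη, G.s_comp η β hβ]

end CStar

end KGraph

theorem stmt13_general {k : ℕ} (G : KGraph k) (hFA : G.FinitelyAligned) (σ : G.Cocycle)
    {A : Type*} [NonUnitalNormedRing A] [StarRing A]
    [NormedSpace ℂ A] [IsScalarTower ℂ A A] [SMulCommClass ℂ A A]
    [StarModule ℂ A]
    (t : G.Path → A) (ht : G.IsTCK σ t)
    (b : G.Path → (Fin k → ℤ)) (hb : ∀ l : G.Path, G.dZ l = b (G.s l) - b (G.r l))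
    (μ ν η ζ : G.Path) (h1 : G.s μ = G.s ν) (h2 : G.s η = G.s ζ) :
    (t μ * star (t ν)) * (t η * star (t ζ)) ∈
      closure (↑(Submodule.span ℂ
        {x : A | ∃ α β : G.Path, G.s α = G.s β ∧
          b (G.s α) = b (G.s μ) ⊔ b (G.s η) ∧ x = t α * star (t β)}) : Set A) := by
  rw [ht.mul_star_mul_mul_star_eq_sum μ ζ (hFA ν η).coe_toFinset]
  refine subset_closure (Submodule.sum_mem _ fun l hlF => ?_)
  have hl : l ∈ G.MCE ν η := (hFA ν η).mem_toFinset.1 hlF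
  refine Submodule.span_mono ?_ (ht.summand_mem_span h1 h2 hl)
  rintro x ⟨α, β, hα, hβ, rfl⟩
  refine ⟨α, β, hα.trans hβ.symm, ?_, rfl⟩
  rw [hα, KGraph.apply_s_eq_sup_of_mem_MCE b hb hl, h1]

/-- `(t_μ t_ν*)(t_η t_ζ*)` lies in the closed linear span of the
`t_α t_β*` with `b(s α) = b(s μ) ∨ b(s η)`. -/
theorem stmt13 {k : ℕ} (G : KGraph k) (hFA : G.FinitelyAligned) (σ : G.Cocycle)
    {A : Type*} [NonUnitalNormedRing A] [StarRing A] [CStarRing A]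
    [NormedSpace ℂ A] [IsScalarTower ℂ A A] [SMulCommClass ℂ A A]
    [StarModule ℂ A] [CompleteSpace A]
    (t : G.Path → A) (ht : G.IsTCK σ t)
    (b : G.Path → (Fin k → ℤ)) (hb : ∀ l : G.Path, G.dZ l = b (G.s l) - b (G.r l))
    (μ ν η ζ : G.Path) (h1 : G.s μ = G.s ν) (h2 : G.s η = G.s ζ) :
    (t μ * star (t ν)) * (t η * star (t ζ)) ∈
      closure (↑(Submodule.span ℂ
        {x : A | ∃ α β : G.Path, G.s α = G.s β ∧
          b (G.s α) = b (G.s μ) ⊔ b (G.s η) ∧ x = t α * star (t β)}) : Set A) :=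
  stmt13_general G hFA σ t ht b hb μ ν η ζ h1 h2
end

section
/- Let Λ be a row-finite k-graph with no sources and suppose μ, ν ∈ Λ satisfy s(μ) = s(ν). Then μ ∼ ν if and only if MCE(μτ, ντ) ≠ ∅ for every τ ∈ s(μ)Λ. -/
open scoped BigOperators

/-!
Write `a ⊑ l` when `l = a δ` for some `δ`. If `MCE(μτ, ντ) ≠ ∅` for all `τ`, take
`ρ ∈ ℓ_μ(S)`, say `ρ ⊑ μτ` with `τ ∈ S`, and an `x ∈ S` of degree `d(τ) + d(ρ)`; then
`τ ⊑ x`, and a common extension `λ` of `μx` and `νx` has `ρ ⊑ μx ⊑ λ` and `νx ⊑ λ`. By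
unique factorisation, `ρ ⊑ νx` since `d(ρ) ≤ d(νx)`, so `ρ ∈ ℓ_ν(S)`. Conversely, absence
of sources lets us extend `τ` to an infinite path `τ ⊑ c₁ ⊑ c₂ ⊑ ⋯` whose prefixes form an
ultrafilter `S ∋ τ`. Then `μτ ∈ ℓ_μ(S) = ℓ_ν(S)` gives `μτ ⊑ ντ'` with `τ' ∈ S`, and a
common extension `e` of `τ, τ'` in `S` makes `νe` a common extension of `μτ` and `ντ`.
-/

namespace KGraph

variable {k : ℕ} (G : KGraph k)

def IsPrefix (a l : G.Path) : Prop := ∃ δ, G.s a = G.r δ ∧ G.comp a δ = l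

variable {G}

lemma isPrefix_comp {a δ : G.Path} (h : G.s a = G.r δ) : G.IsPrefix a (G.comp a δ) :=
  ⟨δ, h, rfl⟩

lemma isPrefix_refl (l : G.Path) : G.IsPrefix l l :=
  ⟨G.s l, (G.r_of_vertex _ (G.d_s l)).symm, G.comp_id l⟩

lemma r_isPrefix (l : G.Path) : G.IsPrefix (G.r l) l :=
  ⟨l, G.s_of_vertex _ (G.d_r l), G.id_comp l⟩

lemma IsPrefix.trans {a b c : G.Path} (hab : G.IsPrefix a b) (hbc : G.IsPrefix b c) :
    G.IsPrefix a c := by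
  obtain ⟨α, hα, rfl⟩ := hab
  obtain ⟨β, hβ, rfl⟩ := hbc
  rw [G.s_comp a α hα] at hβ
  exact ⟨G.comp α β, by rw [G.r_comp α β hβ]; exact hα, (G.comp_assoc a α β hα hβ).symm⟩

instance : Std.Refl G.IsPrefix := ⟨isPrefix_refl⟩

instance : IsTrans G.Path G.IsPrefix := ⟨fun _ _ _ => IsPrefix.trans⟩

lemma IsPrefix.r_eq {a l : G.Path} (h : G.IsPrefix a l) : G.r a = G.r l := by
  obtain ⟨δ, hδ, rfl⟩ := h
  exact (G.r_comp a δ hδ).symm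

lemma IsPrefix.d_le {a l : G.Path} (h : G.IsPrefix a l) : G.d a ≤ G.d l := by
  obtain ⟨δ, hδ, rfl⟩ := h
  rw [G.d_comp a δ hδ]
  exact le_self_add

lemma IsPrefix.comp_left {μ a l : G.Path} (h : G.IsPrefix a l) (hμ : G.s μ = G.r a) :
    G.IsPrefix (G.comp μ a) (G.comp μ l) := by
  obtain ⟨δ, hδ, rfl⟩ := h
  refine ⟨δ, by rw [G.s_comp μ a hμ]; exact hδ, ?_⟩
  exact G.comp_assoc μ a δ hμ hδ

lemma exists_isPrefix_d_eq {l : G.Path} {n : Fin k → ℕ} (h : n ≤ G.d l) :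
    ∃ a, G.IsPrefix a l ∧ G.d a = n := by
  obtain ⟨⟨a, δ⟩, ⟨ha, -, hδ, hl⟩, -⟩ := G.factor l n (G.d l - n) (add_tsub_cancel_of_le h).symm
  exact ⟨a, ⟨δ, hδ, hl⟩, ha⟩

lemma IsPrefix.eq_of_d_eq {a b l : G.Path} (ha : G.IsPrefix a l) (hb : G.IsPrefix b l)
    (hd : G.d a = G.d b) : a = b := by
  obtain ⟨α, hα, hl⟩ := ha
  obtain ⟨β, hβ, rfl⟩ := hb
  have hdl : G.d (G.comp b β) = G.d a + G.d β := by rw [G.d_comp b β hβ, hd]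
  have hdα : G.d α = G.d β := by
    have h := G.d_comp a α hα
    rw [hl, hdl] at h
    exact (add_left_cancel h).symm
  obtain ⟨_, -, huniq⟩ := G.factor _ _ _ hdl
  exact congrArg Prod.fst
    ((huniq (a, α) ⟨rfl, hdα, hα, hl⟩).trans (huniq (b, β) ⟨hd.symm, rfl, hβ, rfl⟩).symm)

lemma IsPrefix.of_isPrefix_of_d_le {a b l : G.Path} (ha : G.IsPrefix a l)
    (hb : G.IsPrefix b l) (hd : G.d a ≤ G.d b) : G.IsPrefix a b := by
  obtain ⟨a', ha'b, ha'⟩ := G.exists_isPrefix_d_eq hd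
  rwa [(ha'b.trans hb).eq_of_d_eq ha ha'] at ha'b

lemma mce_comm (a b : G.Path) : G.MCE a b = G.MCE b a := by
  ext e
  simp only [MCE, Set.mem_ofPred_eq, sup_comm (G.d a), and_comm]

lemma exists_mem_mce_isPrefix {a b l : G.Path} (ha : G.IsPrefix a l) (hb : G.IsPrefix b l) :
    ∃ e ∈ G.MCE a b, G.IsPrefix e l := by
  obtain ⟨e, hel, hde⟩ := G.exists_isPrefix_d_eq (sup_le ha.d_le hb.d_le)
  exact ⟨e, ⟨hde, ha.of_isPrefix_of_d_le hel (hde ▸ le_sup_left),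
    hb.of_isPrefix_of_d_le hel (hde ▸ le_sup_right)⟩, hel⟩

section Filter

variable {S : Set G.Path}

lemma IsFilter.mem_of_isPrefix (hS : G.IsFilter S) {a l : G.Path} (h : G.IsPrefix a l)
    (hl : l ∈ S) : a ∈ S := by
  obtain ⟨δ, hδ, rfl⟩ := h
  exact hS.1 a ⟨δ, hδ, hl⟩

lemma IsFilter.exists_isPrefix_isPrefix (hS : G.IsFilter S) {a b : G.Path} (ha : a ∈ S)
    (hb : b ∈ S) : ∃ e ∈ S, G.IsPrefix a e ∧ G.IsPrefix b e := by
  obtain ⟨e, ⟨-, hae, hbe⟩, he⟩ := hS.2 a ha b hb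
  exact ⟨e, he, hae, hbe⟩

lemma IsFilter.r_eq (hS : G.IsFilter S) {v l : G.Path} (hv : G.IsVertex v) (hvS : v ∈ S)
    (hl : l ∈ S) : G.r l = v := by
  obtain ⟨e, -, hle, hve⟩ := hS.exists_isPrefix_isPrefix hl hvS
  rw [hle.r_eq, ← hve.r_eq, G.r_of_vertex v hv]

lemma IsFilter.isPrefix_of_d_le (hS : G.IsFilter S) {a b : G.Path} (ha : a ∈ S) (hb : b ∈ S)
    (hd : G.d a ≤ G.d b) : G.IsPrefix a b := by
  obtain ⟨e, -, hae, hbe⟩ := hS.exists_isPrefix_isPrefix ha hb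
  exact hae.of_isPrefix_of_d_le hbe hd

end Filter

lemma lmap_subset_lmap {μ ν : G.Path} (hs : G.s μ = G.s ν)
    (H : ∀ τ, G.r τ = G.s μ → (G.MCE (G.comp μ τ) (G.comp ν τ)).Nonempty)
    {S : Set G.Path} (hS : G.IsUltrafilter S) (hμS : G.s μ ∈ S) :
    G.lmap μ S ⊆ G.lmap ν S := by
  rintro ρ ⟨τ, hτS, hμτ, hρ⟩
  obtain ⟨x, hxS, hdx⟩ := hS.2 (G.d τ + G.d ρ)
  have hτx : G.IsPrefix τ x := hS.1.isPrefix_of_d_le hτS hxS (hdx ▸ le_self_add)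
  have hμx : G.s μ = G.r x := (hS.1.r_eq (G.d_s μ) hμS hxS).symm
  obtain ⟨l, -, hμxl, hνxl⟩ := H x hμx.symm
  have hρl : G.IsPrefix ρ l := IsPrefix.trans hρ ((hτx.comp_left hμτ).trans hμxl)
  have hνx : G.s ν = G.r x := hs ▸ hμx
  refine ⟨x, hxS, hνx, hρl.of_isPrefix_of_d_le hνxl ?_⟩
  rw [G.d_comp ν x hνx, hdx]
  exact le_add_left le_add_self

lemma mce_comp_nonempty_of_lmap_eq {μ ν τ : G.Path} {S : Set G.Path} (hS : G.IsFilter S)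
    (hτS : τ ∈ S) (hμτ : G.s μ = G.r τ) (hντ : G.s ν = G.r τ)
    (h : G.lmap μ S = G.lmap ν S) : (G.MCE (G.comp μ τ) (G.comp ν τ)).Nonempty := by
  have hmem : G.comp μ τ ∈ G.lmap ν S := h ▸ ⟨τ, hτS, hμτ, isPrefix_refl _⟩
  obtain ⟨τ', hτ'S, hντ', hμτν⟩ := hmem
  obtain ⟨e, -, hτe, hτ'e⟩ := hS.exists_isPrefix_isPrefix hτS hτ'S
  obtain ⟨l, hl, -⟩ :=
    G.exists_mem_mce_isPrefix (IsPrefix.trans hμτν (hτ'e.comp_left hντ')) (hτe.comp_left hντ)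
  exact ⟨l, hl⟩

lemma isUltrafilter_setOf_isPrefix {c : ℕ → G.Path} (hc : ∀ n, G.IsPrefix (c n) (c (n + 1)))
    (hd : ∀ m, ∃ N, m ≤ G.d (c N)) : G.IsUltrafilter {l | ∃ n, G.IsPrefix l (c n)} := by
  have hmono := Nat.rel_of_forall_rel_succ_of_le G.IsPrefix hc
  refine ⟨⟨?_, ?_⟩, ?_⟩
  · rintro l ⟨δ, hδ, n, hn⟩
    exact ⟨n, (G.isPrefix_comp hδ).trans hn⟩
  · rintro a ⟨m, ha⟩ b ⟨n, hb⟩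
    obtain ⟨e, he, hec⟩ := G.exists_mem_mce_isPrefix
      (ha.trans (hmono (le_max_left m n))) (hb.trans (hmono (le_max_right m n)))
    exact ⟨e, he, _, hec⟩
  · intro m
    obtain ⟨N, hN⟩ := hd m
    obtain ⟨a, ha, rfl⟩ := G.exists_isPrefix_d_eq hN
    exact ⟨a, ⟨N, ha⟩, rfl⟩

lemma exists_isPrefix_d_eq_add_one (hrf : G.RowFiniteNoSources) (l : G.Path) :
    ∃ l', G.IsPrefix l l' ∧ G.d l' = G.d l + 1 := by
  obtain ⟨e, he, hde⟩ := (hrf (G.s l) (G.d_s l) 1).2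
  exact ⟨G.comp l e, G.isPrefix_comp he.symm, by rw [G.d_comp l e he.symm, hde]⟩

lemma exists_isUltrafilter_mem (hrf : G.RowFiniteNoSources) (τ : G.Path) :
    ∃ S, G.IsUltrafilter S ∧ τ ∈ S := by
  choose f hf hdf using G.exists_isPrefix_d_eq_add_one hrf
  have hd : ∀ n : ℕ, G.d (f^[n] τ) = G.d τ + n := by
    intro n
    induction n with
    | zero => simp
    | succ n ih => rw [Function.iterate_succ_apply', hdf, ih, Nat.cast_succ, add_assoc]
  refine ⟨_, G.isUltrafilter_setOf_isPrefix (c := fun n => f^[n] τ) (fun n => ?_)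
    (fun m => ⟨Finset.univ.sup m, fun i => ?_⟩), 0, isPrefix_refl τ⟩
  · rw [Function.iterate_succ_apply']
    exact hf _
  · rw [hd, Pi.add_apply, Pi.natCast_apply]
    exact le_add_left (Finset.le_sup (Finset.mem_univ i))

end KGraph

/-- `μ ∼ ν` iff `MCE(μτ, ντ) ≠ ∅` for every `τ ∈ s(μ)Λ`. -/
theorem stmt16 {k : ℕ} (G : KGraph k) (hrf : G.RowFiniteNoSources)
    (μ ν : G.Path) (hs : G.s μ = G.s ν) :
    G.PEquiv μ ν ↔
      ∀ τ : G.Path, G.r τ = G.s μ →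
        (G.MCE (G.comp μ τ) (G.comp ν τ)).Nonempty := by
  constructor
  · intro h τ hτ
    obtain ⟨S, hS, hτS⟩ := G.exists_isUltrafilter_mem hrf τ
    have hμS : G.s μ ∈ S := hτ ▸ hS.1.mem_of_isPrefix (G.r_isPrefix τ) hτS
    exact G.mce_comp_nonempty_of_lmap_eq hS.1 hτS hτ.symm (hs ▸ hτ.symm) (h S hS hμS)
  · intro H S hS hμS
    refine (G.lmap_subset_lmap hs H hS hμS).antisymm
      (G.lmap_subset_lmap hs.symm (fun τ hτ => ?_) hS (hs ▸ hμS))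
    rw [G.mce_comm]
    exact H τ (hs ▸ hτ)
end
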